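/- arXiv:2507.10294 — 13 statements merged into one kernel-verified Lean document; each statement's English description precedes it below -/
import Mathlib

section
/- For every integer n ≥ 2, every card label 1 ≤ i ≤ n and every position 1 ≤ j ≤ n, the number of functions b from {1,…,n} to {top, bottom} such that pos(i,b) = j equals 2^(n−i) · (C(i−1, j−1) + C(i−1, n−j)), where C(a,b) denotes the binomial coefficient with C(a,b) = 0 if b < 0 or b > a. Consequently, the probability that card i lands in position j after a one-time single-shelf shuffle is (C(i−1,j−1)+C(i−1,n−j))/2^i. -/
/-!
Card `i` ends in position `j` exactly when either it is placed on top and exactly `j - 1` of the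
later-drawn cards `1, …, i - 1` also go on top, or it is placed at the bottom and exactly `n - j`
of them also go to the bottom. The event only constrains `b 1, …, b i`, so each case is counted by
a binomial coefficient `C(i - 1, ·)` times `2 ^ (n - i)` free choices for the cards `i + 1, …, n`.
-/

/-- One-time single-shelf shuffle: cards `n, n-1, …, 1` are drawn in that order and
placed on top (`b i = true`) or bottom (`b i = false`) of a growing pile.
`shelfPos n b i` is the final position (from the top) of card `i`. -/
def shelfPos (n : ℕ) (b : ℕ → Bool) (i : ℕ) : ℕ :=
  if b i then ((Finset.Ico 1 i).filter (fun k => b k = true)).card + 1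
  else n - ((Finset.Ico 1 i).filter (fun k => b k = false)).card

/-- Extend a placement function on `{1,…,n}` (encoded as `Fin n → Bool`, with index
`k - 1` corresponding to card `k`) to all of `ℕ`. -/
def extFn (n : ℕ) (b : Fin n → Bool) : ℕ → Bool :=
  fun k => if h : k - 1 < n then b ⟨k - 1, h⟩ else false

open Finset

theorem ite_not_eq_self_iff (p : Prop) [Decidable p] (v : Bool) :
    (if p then v else !v) = v ↔ p := by
  cases v <;> by_cases p <;> simp_all

theorem card_filter_apply_eq_and_card_filter_apply_eq {α : Type*} [Fintype α] [DecidableEq α]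
    {A : Finset α} {x : α} (hx : x ∉ A) (v : Bool) (t : ℕ) :
    #{f : α → Bool | f x = v ∧ #{a ∈ A | f a = v} = t}
      = (#A).choose t * 2 ^ (Fintype.card α - #A - 1) := by
  set B := univ \ insert x A
  have hB : #B = Fintype.card α - #A - 1 := by
    rw [card_sdiff_of_subset (subset_univ _), card_insert_of_notMem hx, card_univ]; omega
  have hmemB (a : α) : a ∈ B ↔ a ≠ x ∧ a ∉ A := by simp [B]
  rw [← hB, ← card_powersetCard, ← card_powerset, ← card_product]
  -- `f` is determined by `f x = v` and the sets where it takes the value `v` inside `A` and `B`.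
  refine card_nbij' (fun f => ({a ∈ A | f a = v}, {a ∈ B | f a = v}))
    (fun S a => if a = x ∨ a ∈ S.1 ∨ a ∈ S.2 then v else !v) ?_ ?_ ?_ ?_
  · intro f hf
    simp only [coe_filter, mem_univ, true_and, Set.mem_ofPred_eq] at hf
    simp only [coe_product, Set.mem_prod, mem_coe, mem_powersetCard, mem_powerset]
    exact ⟨⟨filter_subset _ _, hf.2⟩, filter_subset _ _⟩
  · rintro ⟨S, T⟩ hST
    simp only [coe_product, Set.mem_prod, mem_coe, mem_powersetCard, mem_powerset,
      subset_iff, hmemB] at hST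
    obtain ⟨⟨hSA, rfl⟩, hTB⟩ := hST
    simp only [coe_filter, mem_univ, true_and, Set.mem_ofPred_eq, ite_not_eq_self_iff]
    refine ⟨Or.inl trivial, congrArg card ?_⟩
    ext a
    simp only [mem_filter]
    grind
  · intro f hf
    simp only [coe_filter, mem_univ, true_and, Set.mem_ofPred_eq] at hf
    funext a
    have hcond : (a = x ∨ a ∈ {a ∈ A | f a = v} ∨ a ∈ {a ∈ B | f a = v}) ↔ f a = v := by
      simp only [mem_filter, hmemB]
      grind
    simp only [hcond]
    cases f a <;> cases v <;> rfl
  · rintro ⟨S, T⟩ hST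
    simp only [coe_product, Set.mem_prod, mem_coe, mem_powersetCard, mem_powerset,
      subset_iff, hmemB] at hST
    simp only [ite_not_eq_self_iff, Prod.mk.injEq]
    constructor <;> ext a <;> simp only [mem_filter, hmemB] <;> grind

section ShelfShuffle

variable {n : ℕ}

theorem extFn_succ (b : Fin n → Bool) (m : Fin n) : extFn n b (m + 1) = b m := by
  simp [extFn]

theorem card_filter_extFn_Ico (b : Fin n → Bool) (x : Fin n) (v : Bool) :
    #{k ∈ Ico 1 (x + 1) | extFn n b k = v} = #{m ∈ Iio x | b m = v} := by
  symm
  refine card_bij (fun m _ => m + 1) ?_ ?_ ?_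
  · intro m hm
    simp only [mem_filter, mem_Iio, mem_Ico] at hm ⊢
    exact ⟨by omega, extFn_succ b m ▸ hm.2⟩
  · intro m _ m' _ h
    exact Fin.ext (by omega)
  · intro k hk
    simp only [mem_filter, mem_Ico] at hk
    refine ⟨⟨k - 1, by omega⟩, ?_, Nat.sub_add_cancel hk.1.1⟩
    simp only [mem_filter, mem_Iio, Fin.lt_def]
    refine ⟨by omega, ?_⟩
    rw [← extFn_succ b, Fin.val_mk, Nat.sub_add_cancel hk.1.1]
    exact hk.2

theorem shelfPos_extFn_succ (b : Fin n → Bool) (x : Fin n) :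
    shelfPos n (extFn n b) (x + 1) =
      if b x then #{m ∈ Iio x | b m = true} + 1 else n - #{m ∈ Iio x | b m = false} := by
  simp only [shelfPos, extFn_succ, card_filter_extFn_Ico]

theorem shelfPos_extFn_succ_eq_iff (b : Fin n → Bool) (x : Fin n) {j : ℕ} (hj1 : 1 ≤ j)
    (hjn : j ≤ n) :
    shelfPos n (extFn n b) (x + 1) = j ↔
      (b x = true ∧ #{m ∈ Iio x | b m = true} = j - 1) ∨
        (b x = false ∧ #{m ∈ Iio x | b m = false} = n - j) := by
  have hlt : #{m ∈ Iio x | b m = false} < n :=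
    (card_filter_le _ _).trans_lt ((Fin.card_Iio x).symm ▸ x.2)
  rw [shelfPos_extFn_succ]
  cases b x <;>
    simp only [Bool.false_eq_true, Bool.true_eq_false, ↓reduceIte, true_and, false_and, false_or,
      or_false] <;>
    omega

theorem card_shelfPos_extFn_succ_eq (x : Fin n) {j : ℕ} (hj1 : 1 ≤ j) (hjn : j ≤ n) :
    #{b : Fin n → Bool | shelfPos n (extFn n b) (x + 1) = j}
      = 2 ^ (n - (x + 1)) * ((x : ℕ).choose (j - 1) + (x : ℕ).choose (n - j)) := by
  have hx : x ∉ Iio x := by simp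
  simp only [shelfPos_extFn_succ_eq_iff _ x hj1 hjn]
  rw [filter_or, card_union_of_disjoint, card_filter_apply_eq_and_card_filter_apply_eq hx,
    card_filter_apply_eq_and_card_filter_apply_eq hx, Fin.card_Iio, Fintype.card_fin]
  · rw [Nat.sub_sub]
    ring
  · exact disjoint_filter.2 fun b _ h₁ h₂ => by simp [h₁.1] at h₂

end ShelfShuffle

theorem stmt0_general (n i j : ℕ) (hi1 : 1 ≤ i) (hin : i ≤ n)
    (hj1 : 1 ≤ j) (hjn : j ≤ n) :
    ((Finset.univ : Finset (Fin n → Bool)).filter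
        (fun b => shelfPos n (extFn n b) i = j)).card
      = 2 ^ (n - i) * (Nat.choose (i - 1) (j - 1) + Nat.choose (i - 1) (n - j)) ∧
    (((Finset.univ : Finset (Fin n → Bool)).filter
        (fun b => shelfPos n (extFn n b) i = j)).card : ℚ) / 2 ^ n
      = ((Nat.choose (i - 1) (j - 1) : ℚ) + Nat.choose (i - 1) (n - j)) / 2 ^ i := by
  obtain ⟨x, rfl⟩ : ∃ x : Fin n, i = x + 1 := ⟨⟨i - 1, by omega⟩, (Nat.sub_add_cancel hi1).symm⟩
  have hcount := card_shelfPos_extFn_succ_eq x hj1 hjn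
  refine ⟨hcount, ?_⟩
  have hpow : (2 : ℚ) ^ n = 2 ^ (n - (x + 1)) * 2 ^ ((x : ℕ) + 1) := by
    rw [← pow_add, Nat.sub_add_cancel hin]
  rw [hcount, hpow]
  push_cast
  field_simp

theorem stmt0 (n i j : ℕ) (hn : 2 ≤ n) (hi1 : 1 ≤ i) (hin : i ≤ n)
    (hj1 : 1 ≤ j) (hjn : j ≤ n) :
    ((Finset.univ : Finset (Fin n → Bool)).filter
        (fun b => shelfPos n (extFn n b) i = j)).card
      = 2 ^ (n - i) * (Nat.choose (i - 1) (j - 1) + Nat.choose (i - 1) (n - j)) ∧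
    (((Finset.univ : Finset (Fin n → Bool)).filter
        (fun b => shelfPos n (extFn n b) i = j)).card : ℚ) / 2 ^ n
      = ((Nat.choose (i - 1) (j - 1) : ℚ) + Nat.choose (i - 1) (n - j)) / 2 ^ i :=
  stmt0_general n i j hi1 hin hj1 hjn
end

section
/- For every integer n ≥ 1, the matrix M is doubly stochastic: all its entries are nonnegative, every row sum equals 1 (i.e., for each 1 ≤ i ≤ n, the sum over j = 1,…,n of p(i,j) equals 1), and every column sum equals 1 (i.e., for each 1 ≤ j ≤ n, the sum over i = 1,…,n of p(i,j) equals 1). -/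
/-!
Row sums: after the reflection `j ↦ n + 1 - j` both binomial terms of row `i` sum to `2 ^ (i - 1)`.
Column sums: `C(i - 1, k) / 2 ^ i` is the probability that the `(k + 1)`-st head of a fair coin
appears at toss `i`, so summing over `i ≤ n` gives `1 - P(at most k heads in n tosses)`. For
`k = j - 1` and `k = n - j` these two tail probabilities add up to `1`, by the symmetry
`C(n, r) = C(n, n - r)`.
-/

/-- The transition probability of the one-time single-shelf shuffle: `p n i j` is the
probability that card `i` lands in position `j` in an `n`-card deck. -/
def p (n i j : ℕ) : ℚ :=
  ((Nat.choose (i - 1) (j - 1) : ℚ) + Nat.choose (i - 1) (n - j)) / 2 ^ i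

open Finset

theorem Finset.sum_Icc_one_eq_sum_range {M : Type*} [AddCommMonoid M] (f : ℕ → M) (n : ℕ) :
    ∑ i ∈ Icc 1 n, f i = ∑ i ∈ range n, f (i + 1) := by
  rw [range_eq_Ico, sum_Ico_add', zero_add, Ico_add_one_right_eq_Icc]

theorem Nat.sum_range_choose_of_lt {m N : ℕ} (h : m < N) :
    ∑ k ∈ range N, m.choose k = 2 ^ m := by
  rw [← sum_range_add_sum_Ico _ h, Nat.sum_range_choose, add_eq_left]
  exact sum_eq_zero fun k hk => Nat.choose_eq_zero_of_lt (mem_Ico.1 hk).1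

theorem Nat.sum_range_choose_succ_add_choose (n k : ℕ) :
    ∑ r ∈ range (k + 1), (n + 1).choose r + n.choose k = 2 * ∑ r ∈ range (k + 1), n.choose r := by
  induction k with
  | zero => simp
  | succ k ih =>
    rw [sum_range_succ, sum_range_succ n.choose, Nat.choose_succ_succ']
    omega

theorem Nat.sum_range_choose_add_sum_range_choose {n a b : ℕ} (h : a + b = n + 1) :
    ∑ r ∈ range a, n.choose r + ∑ r ∈ range b, n.choose r = 2 ^ n := by
  have hsymm : ∑ r ∈ range b, n.choose r = ∑ r ∈ range b, n.choose (a + r) := by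
    rw [← sum_range_reflect]
    refine sum_congr rfl fun r hr => ?_
    rw [mem_range] at hr
    rw [← Nat.choose_symm (by omega)]
    congr 1
    omega
  rw [hsymm, ← sum_range_add, h, Nat.sum_range_choose]

theorem sum_range_choose_div_two_pow_add (n k : ℕ) :
    ∑ i ∈ range n, (i.choose k : ℚ) / 2 ^ (i + 1) +
      (∑ r ∈ range (k + 1), n.choose r : ℕ) / 2 ^ n = 1 := by
  induction n with
  | zero => simp [sum_range_succ']
  | succ n ih =>
    have hpascal : ((∑ r ∈ range (k + 1), (n + 1).choose r : ℕ) : ℚ) + n.choose k =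
        2 * (∑ r ∈ range (k + 1), n.choose r : ℕ) := by
      exact_mod_cast Nat.sum_range_choose_succ_add_choose n k
    rw [← ih, sum_range_succ, add_assoc, ← add_div, add_comm (n.choose k : ℚ), hpascal, pow_succ,
      mul_comm (2 : ℚ), mul_div_mul_right _ _ two_ne_zero]

theorem p_succ (n i j : ℕ) :
    p n (i + 1) j = ((i.choose (j - 1) : ℚ) + i.choose (n - j)) / 2 ^ (i + 1) := by
  simp [p]

theorem p_nonneg (n i j : ℕ) : 0 ≤ p n i j := by
  unfold p
  positivity

theorem sum_p_row {n i : ℕ} (hi : i ∈ Icc 1 n) : ∑ j ∈ Icc 1 n, p n i j = 1 := by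
  obtain ⟨m, rfl⟩ : ∃ m, i = m + 1 := ⟨i - 1, by grind⟩
  have hm : m < n := by grind
  have hreflect :
      ∑ j ∈ range n, (m.choose (n - (j + 1)) : ℚ) = ∑ j ∈ range n, (m.choose j : ℚ) := by
    rw [← sum_range_reflect _ n]
    refine sum_congr rfl fun j hj => ?_
    rw [mem_range] at hj
    congr 2
    omega
  have hrow : ∑ j ∈ range n, (m.choose j : ℚ) = 2 ^ m := mod_cast Nat.sum_range_choose_of_lt hm
  simp only [sum_Icc_one_eq_sum_range, p_succ, ← sum_div, sum_add_distrib, Nat.add_sub_cancel,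
    hreflect, hrow]
  rw [pow_succ]
  field_simp
  ring

theorem sum_p_col {n j : ℕ} (hj : j ∈ Icc 1 n) : ∑ i ∈ Icc 1 n, p n i j = 1 := by
  have htails : ((∑ r ∈ range (j - 1 + 1), n.choose r : ℕ) : ℚ) / 2 ^ n +
      ((∑ r ∈ range (n - j + 1), n.choose r : ℕ) : ℚ) / 2 ^ n = 1 := by
    rw [← add_div, ← Nat.cast_add, Nat.sum_range_choose_add_sum_range_choose (by grind)]
    simp
  simp only [sum_Icc_one_eq_sum_range, p_succ, add_div, sum_add_distrib]
  linarith [sum_range_choose_div_two_pow_add n (j - 1), sum_range_choose_div_two_pow_add n (n - j)]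

theorem stmt2_general (n : ℕ) :
    (∀ i ∈ Finset.Icc 1 n, ∀ j ∈ Finset.Icc 1 n, 0 ≤ p n i j) ∧
    (∀ i ∈ Finset.Icc 1 n, ∑ j ∈ Finset.Icc 1 n, p n i j = 1) ∧
    (∀ j ∈ Finset.Icc 1 n, ∑ i ∈ Finset.Icc 1 n, p n i j = 1) :=
  ⟨fun i _ j _ => p_nonneg n i j, fun _ => sum_p_row, fun _ => sum_p_col⟩

theorem stmt2 (n : ℕ) (hn : 1 ≤ n) :
    (∀ i ∈ Finset.Icc 1 n, ∀ j ∈ Finset.Icc 1 n, 0 ≤ p n i j) ∧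
    (∀ i ∈ Finset.Icc 1 n, ∑ j ∈ Finset.Icc 1 n, p n i j = 1) ∧
    (∀ j ∈ Finset.Icc 1 n, ∑ i ∈ Finset.Icc 1 n, p n i j = 1) :=
  stmt2_general n
end

section
/- For every integer n ≥ 1, the rank of the matrix M (over the rationals, equivalently over the reals) equals ⌈n/2⌉; equivalently, 0 is an eigenvalue of M whose geometric multiplicity (the dimension of the null space of M) equals n/2 when n is even and (n−1)/2 when n is odd. -/
/-- The position matrix `M` of a one-time single-shelf shuffle of an `n`-card deck,
indexed by `Fin n` (so row `i`/column `j` correspond to card `i+1`/position `j+1`). -/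
def shelfMatrix (n : ℕ) : Matrix (Fin n) (Fin n) ℚ :=
  Matrix.of fun i j => p n (i.1 + 1) (j.1 + 1)

/-!
Position `j` and its mirror image `n + 1 - j` are equally likely for every card, so `M` has
at most `⌈n/2⌉` distinct columns. Conversely, the leading `⌈n/2⌉ × ⌈n/2⌉` block of `M` is lower
triangular with positive diagonal: card `i` can only reach positions `≤ i` or `≥ n + 1 - i`.
Hence `rank M = ⌈n/2⌉`, and rank–nullity gives the kernel.
-/

namespace Matrix

variable {m n n₀ R : Type*} [Fintype n] [Fintype n₀]

theorem rank_eq_card_of_isLowerTriangular {K : Type*} [Field K] [LinearOrder n] [DecidableEq n]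
    (A : Matrix n n K) (hA : A.IsLowerTriangular) (hd : ∀ i, A i i ≠ 0) :
    A.rank = Fintype.card n := by
  rw [← mul_one A, rank_mul_eq_right_of_isLowerTriangular A 1 hA hd, rank_one]

theorem rank_le_card_of_col_eq [CommRing R] [StrongRankCondition R] (A : Matrix m n R)
    (c : n₀ → n) (f : n → n₀) (hcf : ∀ i j, A i (c (f j)) = A i j) :
    A.rank ≤ Fintype.card n₀ := by
  have hA : (A.submatrix id c).submatrix id f = A := by
    ext i j
    exact hcf i j
  calc A.rank = ((A.submatrix id c).submatrix id f).rank := by rw [hA]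
    _ ≤ (A.submatrix id c).rank := rank_submatrix_le _ _ _
    _ ≤ Fintype.card n₀ := rank_le_card_width _

end Matrix

section ShelfMatrix

variable {n : ℕ}

theorem shelfMatrix_apply_rev (i j : Fin n) : shelfMatrix n i j.rev = shelfMatrix n i j := by
  have h₁ : n - (j.rev.1 + 1) = j.1 := by rw [Fin.val_rev]; omega
  have h₂ : n - (j.1 + 1) = j.rev.1 := by rw [Fin.val_rev]
  simp only [shelfMatrix, Matrix.of_apply, p, Nat.add_sub_cancel, h₁, h₂]
  ring

theorem shelfMatrix_apply_eq_zero_of_lt {i j : Fin n} (hij : i < j) (hj : 2 * j.1 < n) :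
    shelfMatrix n i j = 0 := by
  have h₁ : i.1.choose j.1 = 0 := Nat.choose_eq_zero_of_lt hij
  have h₂ : i.1.choose (n - (j.1 + 1)) = 0 := Nat.choose_eq_zero_of_lt (by omega)
  simp [shelfMatrix, p, h₁, h₂]

theorem shelfMatrix_apply_self_ne_zero (i : Fin n) : shelfMatrix n i i ≠ 0 := by
  simp only [shelfMatrix, Matrix.of_apply, p, Nat.add_sub_cancel, Nat.choose_self]
  positivity

theorem add_one_div_two_le_self (n : ℕ) : (n + 1) / 2 ≤ n := by omega

theorem rank_shelfMatrix_leadingBlock :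
    ((shelfMatrix n).submatrix (Fin.castLE (add_one_div_two_le_self n))
      (Fin.castLE (add_one_div_two_le_self n))).rank = (n + 1) / 2 := by
  refine (Matrix.rank_eq_card_of_isLowerTriangular _ ?_ fun i => ?_).trans (Fintype.card_fin _)
  · intro i j hij
    exact shelfMatrix_apply_eq_zero_of_lt (i := Fin.castLE _ i) (j := Fin.castLE _ j) hij
      (by simp only [Fin.val_castLE]; omega)
  · exact shelfMatrix_apply_self_ne_zero _

def foldHalf (j : Fin n) : Fin ((n + 1) / 2) :=
  ⟨min j.1 j.rev.1, by rw [Fin.val_rev]; omega⟩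

theorem castLE_foldHalf (j : Fin n) :
    Fin.castLE (add_one_div_two_le_self n) (foldHalf j) = j ∨
      Fin.castLE (add_one_div_two_le_self n) (foldHalf j) = j.rev := by
  rcases min_choice j.1 j.rev.1 with h | h
  · exact .inl (Fin.ext h)
  · exact .inr (Fin.ext h)

theorem shelfMatrix_apply_castLE_foldHalf (i j : Fin n) :
    shelfMatrix n i (Fin.castLE (add_one_div_two_le_self n) (foldHalf j)) = shelfMatrix n i j := by
  rcases castLE_foldHalf j with h | h <;> rw [h]
  exact shelfMatrix_apply_rev i j

theorem rank_shelfMatrix (n : ℕ) : (shelfMatrix n).rank = (n + 1) / 2 := by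
  refine le_antisymm ?_ ?_
  · simpa using Matrix.rank_le_card_of_col_eq _ _ _ shelfMatrix_apply_castLE_foldHalf
  · exact rank_shelfMatrix_leadingBlock.symm.le.trans (Matrix.rank_submatrix_le _ _ _)

theorem finrank_ker_shelfMatrix (n : ℕ) :
    Module.finrank ℚ (LinearMap.ker (shelfMatrix n).mulVecLin) = n / 2 := by
  have h := LinearMap.finrank_range_add_finrank_ker (shelfMatrix n).mulVecLin
  rw [Module.finrank_fin_fun, ← Matrix.rank, rank_shelfMatrix] at h
  omega

end ShelfMatrix

theorem stmt3_general (n : ℕ) :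
    (shelfMatrix n).rank = (n + 1) / 2 ∧
    Module.finrank ℚ (LinearMap.ker (Matrix.mulVecLin (shelfMatrix n))) = n / 2 :=
  ⟨rank_shelfMatrix n, finrank_ker_shelfMatrix n⟩

theorem stmt3 (n : ℕ) (hn : 1 ≤ n) :
    (shelfMatrix n).rank = (n + 1) / 2 ∧
    Module.finrank ℚ (LinearMap.ker (Matrix.mulVecLin (shelfMatrix n))) = n / 2 :=
  stmt3_general n
end

section
/- For every integer n ≥ 2 and every 1 ≤ j ≤ n, one has p(n−1, j) = p(n, j); that is, the last two rows of M are equal. Equivalently, 2·(C(n−2, j−1) + C(n−2, n−j)) = C(n−1, j−1) + C(n−1, n−j) for all 1 ≤ j ≤ n. -/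
theorem Nat.choose_add_choose_succ_sub {m k : ℕ} (hk : k ≤ m + 1) :
    m.choose k + m.choose (m + 1 - k) = (m + 1).choose k := by
  cases k with
  | zero => simp
  | succ k =>
    rw [Nat.add_sub_add_right, Nat.choose_symm (by omega), Nat.choose_succ_succ', add_comm]

theorem Nat.two_mul_choose_add_choose_succ_sub {m k : ℕ} (hk : k ≤ m + 1) :
    2 * (m.choose k + m.choose (m + 1 - k)) = (m + 1).choose k + (m + 1).choose (m + 1 - k) := by
  rw [Nat.choose_add_choose_succ_sub hk, Nat.choose_symm hk, two_mul]

theorem stmt5 (n : ℕ) (hn : 2 ≤ n) (j : ℕ) (hj1 : 1 ≤ j) (hjn : j ≤ n) :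
    p n (n - 1) j = p n n j ∧
    2 * (Nat.choose (n - 2) (j - 1) + Nat.choose (n - 2) (n - j))
      = Nat.choose (n - 1) (j - 1) + Nat.choose (n - 1) (n - j) := by
  obtain ⟨m, rfl⟩ : ∃ m, n = m + 2 := ⟨n - 2, by omega⟩
  obtain ⟨k, rfl⟩ : ∃ k, j = k + 1 := ⟨j - 1, by omega⟩
  have hrow := Nat.two_mul_choose_add_choose_succ_sub (show k ≤ m + 1 by omega)
  simp only [p, show m + 2 - 1 = m + 1 by omega, show m + 2 - 2 = m by omega,
    show m + 2 - (k + 1) = m + 1 - k by omega, Nat.add_sub_cancel]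
  refine ⟨?_, hrow⟩
  rw [← Nat.cast_add, ← Nat.cast_add, ← hrow]
  push_cast
  field_simp
  ring
end

section
/- For every even integer n ≥ 4, the set of maximizers of column n/2 of M is exactly {n−1, n}: one has p(n−1, n/2) = p(n, n/2) = C(n, n/2)/2^n, and p(i, n/2) < p(n, n/2) for every 1 ≤ i ≤ n−2. -/
/-!
In column `m` of a `2m`-card deck, Pascal's rule turns `p (2m) i m` into `C(i, m) / 2^i`.
Because `C(i + 1, m) / C(i, m) = (i + 1) / (i + 1 - m)`, this quantity is nondecreasing in `i`
up to `2m`, strictly increasing on `[m, 2m - 1]`, and takes the same value at `2m - 1` and `2m`.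
-/

namespace Nat

theorem two_mul_choose_le_choose_succ {i m : ℕ} (h : i + 1 ≤ 2 * m) :
    2 * i.choose m ≤ (i + 1).choose m := by
  rcases lt_or_ge i m with hi | hi
  · simp [Nat.choose_eq_zero_of_lt hi]
  refine Nat.le_of_mul_le_mul_right (c := i + 1 - m) ?_ (by omega)
  calc 2 * i.choose m * (i + 1 - m) ≤ i.choose m * (i + 1) := by
        rw [mul_assoc, mul_left_comm]; exact Nat.mul_le_mul_left _ (by omega)
    _ = (i + 1).choose m * (i + 1 - m) := Nat.choose_mul_succ_eq i m

theorem two_mul_choose_lt_choose_succ {i m : ℕ} (hm : m ≤ i) (h : i + 2 ≤ 2 * m) :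
    2 * i.choose m < (i + 1).choose m := by
  refine Nat.lt_of_mul_lt_mul_right (a := i + 1 - m) ?_
  calc 2 * i.choose m * (i + 1 - m) < i.choose m * (i + 1) := by
        rw [mul_assoc, mul_left_comm]
        exact Nat.mul_lt_mul_of_pos_left (by omega) (Nat.choose_pos hm)
    _ = (i + 1).choose m * (i + 1 - m) := Nat.choose_mul_succ_eq i m

theorem choose_two_mul_add_two (m : ℕ) :
    (2 * m + 2).choose (m + 1) = 2 * (2 * m + 1).choose (m + 1) := by
  rw [Nat.choose_succ_succ', ← Nat.choose_symm_half]
  ring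

end Nat

theorem p_two_mul {i m : ℕ} (hi : 1 ≤ i) (hm : 1 ≤ m) :
    p (2 * m) i m = (i.choose m : ℚ) / 2 ^ i := by
  obtain ⟨i, rfl⟩ := Nat.exists_eq_add_of_le' hi
  obtain ⟨m, rfl⟩ := Nat.exists_eq_add_of_le' hm
  rw [p, show 2 * (m + 1) - (m + 1) = m + 1 by omega, Nat.choose_succ_succ']
  push_cast
  simp

section ChooseDivTwoPow

variable (m : ℕ)

theorem monotoneOn_choose_div_two_pow :
    MonotoneOn (fun i ↦ (i.choose m : ℚ) / 2 ^ i) (Set.Iic (2 * m)) := by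
  refine monotoneOn_of_le_succ Set.ordConnected_Iic fun i _ _ hi ↦ ?_
  have h := Nat.two_mul_choose_le_choose_succ (m := m) (i := i) (by simpa using hi)
  rw [Order.succ_eq_add_one, pow_succ', ← div_div]
  gcongr
  rw [le_div_iff₀ two_pos]
  exact_mod_cast (by omega : i.choose m * 2 ≤ (i + 1).choose m)

theorem choose_div_two_pow_lt_succ {i : ℕ} (hm : m ≤ i) (h : i + 2 ≤ 2 * m) :
    (i.choose m : ℚ) / 2 ^ i < ((i + 1).choose m : ℚ) / 2 ^ (i + 1) := by
  have h := Nat.two_mul_choose_lt_choose_succ hm h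
  rw [pow_succ', ← div_div]
  gcongr
  rw [lt_div_iff₀ two_pos]
  exact_mod_cast (by omega : i.choose m * 2 < (i + 1).choose m)

theorem choose_div_two_pow_two_mul_add_one :
    ((2 * m + 1).choose (m + 1) : ℚ) / 2 ^ (2 * m + 1) =
      ((2 * m + 2).choose (m + 1) : ℚ) / 2 ^ (2 * m + 2) := by
  rw [Nat.choose_two_mul_add_two, pow_succ _ (2 * m + 1)]
  push_cast
  field_simp

end ChooseDivTwoPow

theorem stmt7 (n : ℕ) (hn : 4 ≤ n) (heven : Even n) :
    p n (n - 1) (n / 2) = (Nat.choose n (n / 2) : ℚ) / 2 ^ n ∧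
    p n n (n / 2) = (Nat.choose n (n / 2) : ℚ) / 2 ^ n ∧
    ∀ i, 1 ≤ i → i ≤ n - 2 → p n i (n / 2) < p n n (n / 2) := by
  obtain ⟨m, rfl⟩ := heven.two_dvd
  obtain ⟨k, rfl⟩ : ∃ k, m = k + 2 := ⟨m - 2, by omega⟩
  rw [Nat.mul_div_cancel_left _ two_pos]
  have hlast : p (2 * (k + 2)) (2 * (k + 2)) (k + 2) =
      ((2 * (k + 2)).choose (k + 2) : ℚ) / 2 ^ (2 * (k + 2)) := p_two_mul (by omega) (by omega)
  have hcentral := choose_div_two_pow_two_mul_add_one (k + 1)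
  rw [show 2 * (k + 1) + 2 = 2 * (k + 2) by ring] at hcentral
  refine ⟨?_, hlast, fun i hi hin ↦ ?_⟩
  · rw [show 2 * (k + 2) - 1 = 2 * (k + 1) + 1 by omega, p_two_mul (by omega) (by omega),
      ← hcentral]
  rw [hlast, p_two_mul hi (by omega), ← hcentral]
  calc (i.choose (k + 2) : ℚ) / 2 ^ i
      ≤ ((2 * k + 2).choose (k + 2) : ℚ) / 2 ^ (2 * k + 2) :=
        monotoneOn_choose_div_two_pow _ (Set.mem_Iic.2 (by omega)) (Set.mem_Iic.2 (by omega))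
          (by omega)
    _ < _ := choose_div_two_pow_lt_succ _ (by omega) (by omega)
end

section
/- For every odd integer n ≥ 3, the set of maximizers of the middle column (n+1)/2 of M is exactly {n−1, n}: one has p(n−1, (n+1)/2) = p(n, (n+1)/2), and p(i, (n+1)/2) < p(n, (n+1)/2) for every 1 ≤ i ≤ n−2. -/
namespace Nat

theorem two_mul_choose_lt_choose_succ_s8 {m k : ℕ} (hmk : m ≤ k) (hk : k + 2 ≤ 2 * m) :
    2 * k.choose m < (k + 1).choose m := by
  have hpos : 0 < k.choose m := choose_pos hmk
  have hrec := choose_mul_succ_eq k m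
  refine Nat.lt_of_mul_lt_mul_right (a := k + 1 - m) ?_
  calc 2 * k.choose m * (k + 1 - m) = k.choose m * (2 * (k + 1 - m)) := by ring
    _ < k.choose m * (k + 1) := Nat.mul_lt_mul_of_pos_left (by omega) hpos
    _ = (k + 1).choose m * (k + 1 - m) := hrec

theorem choose_two_mul_eq_two_mul_choose {m : ℕ} (hm : 0 < m) :
    (2 * m).choose m = 2 * (2 * m - 1).choose m := by
  obtain ⟨l, rfl⟩ : ∃ l, m = l + 1 := ⟨m - 1, by omega⟩
  rw [show 2 * (l + 1) = 2 * l + 1 + 1 by ring, choose_succ_succ', ← choose_symm_half,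
    add_tsub_cancel_right]
  ring

end Nat

theorem choose_div_two_pow_strictMonoOn (m : ℕ) :
    StrictMonoOn (fun k => (k.choose m : ℚ) / 2 ^ k) (Set.Icc m (2 * m - 1)) := by
  refine strictMonoOn_of_lt_succ Set.ordConnected_Icc fun k _ hk hk1 => ?_
  rw [Order.succ_eq_add_one] at hk1 ⊢
  have hstep : (2 * k.choose m : ℚ) < (k + 1).choose m := by
    exact_mod_cast Nat.two_mul_choose_lt_choose_succ_s8 hk.1 (by grind)
  rw [pow_succ, ← mul_div_mul_right _ _ (two_ne_zero' ℚ), mul_comm _ (2 : ℚ)]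
  gcongr

theorem choose_div_two_pow_two_mul_sub_one_eq {m : ℕ} (hm : 0 < m) :
    ((2 * m - 1).choose m : ℚ) / 2 ^ (2 * m - 1) = ((2 * m).choose m : ℚ) / 2 ^ (2 * m) := by
  rw [Nat.choose_two_mul_eq_two_mul_choose hm, show 2 * m = 2 * m - 1 + 1 by omega, pow_succ]
  push_cast
  field_simp

theorem choose_div_two_pow_lt_central {m k : ℕ} (hk : k + 2 ≤ 2 * m) :
    (k.choose m : ℚ) / 2 ^ k < ((2 * m).choose m : ℚ) / 2 ^ (2 * m) := by
  rw [← choose_div_two_pow_two_mul_sub_one_eq (by omega)]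
  rcases lt_or_ge k m with hkm | hmk
  · rw [Nat.choose_eq_zero_of_lt hkm, Nat.cast_zero, zero_div]
    exact div_pos (by exact_mod_cast Nat.choose_pos (by omega)) (by positivity)
  · exact choose_div_two_pow_strictMonoOn m ⟨hmk, by omega⟩ ⟨by omega, le_rfl⟩ (by omega)

theorem p_two_mul_add_one_middle (m : ℕ) {i : ℕ} (hi : 1 ≤ i) :
    p (2 * m + 1) i (m + 1) = ((i - 1).choose m : ℚ) / 2 ^ (i - 1) := by
  obtain ⟨k, rfl⟩ : ∃ k, i = k + 1 := ⟨i - 1, by omega⟩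
  rw [p, show 2 * m + 1 - (m + 1) = m by omega, pow_succ]
  simp only [add_tsub_cancel_right]
  field_simp
  ring

theorem stmt8 (n : ℕ) (hn : 3 ≤ n) (hodd : Odd n) :
    p n (n - 1) ((n + 1) / 2) = p n n ((n + 1) / 2) ∧
    ∀ i, 1 ≤ i → i ≤ n - 2 → p n i ((n + 1) / 2) < p n n ((n + 1) / 2) := by
  obtain ⟨m, rfl⟩ := hodd
  have hmid : (2 * m + 1 + 1) / 2 = m + 1 := by omega
  have hlast : p (2 * m + 1) (2 * m + 1) (m + 1) = ((2 * m).choose m : ℚ) / 2 ^ (2 * m) := by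
    rw [p_two_mul_add_one_middle m (by omega), add_tsub_cancel_right]
  rw [hmid, hlast]
  refine ⟨?_, fun i hi hin => ?_⟩
  · rw [p_two_mul_add_one_middle m (by omega), add_tsub_cancel_right]
    exact choose_div_two_pow_two_mul_sub_one_eq (by omega)
  · rw [p_two_mul_add_one_middle m hi]
    exact choose_div_two_pow_lt_central (by omega)
end

section
/- For every integer j ≥ 2 and every integer i ≥ 1, one has C(i−1, j−1)/2^i ≤ C(2j−2, j−1)/2^(2j−1), with equality if and only if i = 2j−1 or i = 2j−2. In particular, max over i ≥ 1 of C(i−1, j−1)/2^i equals C(2j−2, j−1)/2^(2j−1). -/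
/-!
Put `a m = C(m, k) / 2^m`. From `C(m, k) (m + 1) = C(m + 1, k) (m + 1 - k)` the ratio
`a (m + 1) / a m = (m + 1) / (2 (m + 1 - k))` exceeds, equals or falls below `1` according as
`m + 1 < 2k`, `m + 1 = 2k` or `m + 1 > 2k`. So `a` vanishes below `k`, increases strictly up to
`2k - 1`, takes the same value at `2k`, and decreases strictly afterwards. The theorem is this
statement for `k = j - 1` and `m = i - 1`, halved.
-/

def chooseDivTwoPow (k m : ℕ) : ℚ := m.choose k / 2 ^ m

namespace chooseDivTwoPow

variable {k m : ℕ}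

lemma eq_zero_of_lt (h : m < k) : chooseDivTwoPow k m = 0 := by
  simp [chooseDivTwoPow, Nat.choose_eq_zero_of_lt h]

lemma pos (h : k ≤ m) : 0 < chooseDivTwoPow k m := by
  unfold chooseDivTwoPow
  have := Nat.choose_pos h
  positivity

lemma succ_eq_mul (h : k ≤ m) :
    chooseDivTwoPow k (m + 1) = chooseDivTwoPow k m * ((m + 1) / (2 * (m + 1 - k))) := by
  have hchoose : (m.choose k : ℚ) * (m + 1) = (m + 1).choose k * (m + 1 - k) := by
    have := Nat.choose_mul_succ_eq m k
    qify [Nat.le_succ_of_le h] at this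
    exact this
  have hk : (k : ℚ) < m + 1 := by exact_mod_cast Nat.lt_succ_of_le h
  unfold chooseDivTwoPow
  field_simp
  rw [eq_div_iff (by linarith), mul_assoc (2 ^ (m + 1) : ℚ), hchoose, pow_succ]
  ring

lemma two_mul_sub_pos (h : k ≤ m) : (0 : ℚ) < 2 * (m + 1 - k) := by
  have : (k : ℚ) ≤ m := by exact_mod_cast h
  linarith

lemma lt_succ (hkm : k ≤ m) (h : m + 1 < 2 * k) :
    chooseDivTwoPow k m < chooseDivTwoPow k (m + 1) := by
  rw [succ_eq_mul hkm, lt_mul_iff_one_lt_right (pos hkm), one_lt_div (two_mul_sub_pos hkm)]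
  have : (m : ℚ) + 1 < 2 * k := by exact_mod_cast h
  linarith

lemma succ_eq (h : m + 1 = 2 * k) : chooseDivTwoPow k (m + 1) = chooseDivTwoPow k m := by
  have hkm : k ≤ m := by omega
  rw [succ_eq_mul hkm, mul_eq_left₀ (pos hkm).ne', div_eq_one_iff_eq (two_mul_sub_pos hkm).ne']
  have : (m : ℚ) + 1 = 2 * k := by exact_mod_cast h
  linarith

lemma succ_lt (h : 2 * k < m + 1) : chooseDivTwoPow k (m + 1) < chooseDivTwoPow k m := by
  have hkm : k ≤ m := by omega
  rw [succ_eq_mul hkm, mul_lt_iff_lt_one_right (pos hkm), div_lt_one (two_mul_sub_pos hkm)]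
  have : 2 * (k : ℚ) < m + 1 := by exact_mod_cast h
  linarith

lemma strictMonoOn_Icc : StrictMonoOn (chooseDivTwoPow k) (Set.Icc k (2 * k - 1)) :=
  strictMonoOn_of_lt_add_one Set.ordConnected_Icc fun _ _ ha ha' ↦ lt_succ ha.1 (by grind)

lemma strictAntiOn_Ici : StrictAntiOn (chooseDivTwoPow k) (Set.Ici (2 * k)) :=
  strictAntiOn_of_add_one_lt Set.ordConnected_Ici fun _ _ ha _ ↦ succ_lt (by grind)

lemma lt_central (h₁ : m ≠ 2 * k) (h₂ : m + 1 ≠ 2 * k) :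
    chooseDivTwoPow k m < chooseDivTwoPow k (2 * k) := by
  rcases lt_or_ge m k with hmk | hkm
  · rw [eq_zero_of_lt hmk]
    exact pos (by omega)
  rcases lt_or_gt_of_ne h₁ with hlt | hgt
  · have hpeak : 2 * k - 1 + 1 = 2 * k := by omega
    calc chooseDivTwoPow k m
        < chooseDivTwoPow k (2 * k - 1) :=
          strictMonoOn_Icc ⟨hkm, by omega⟩ ⟨by omega, le_rfl⟩ (by omega)
      _ = chooseDivTwoPow k (2 * k) := by rw [← succ_eq hpeak, hpeak]
  · exact strictAntiOn_Ici (Set.mem_Ici.mpr le_rfl) (Set.mem_Ici.mpr hgt.le) hgt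

lemma eq_central_of_add_one_eq (h : m + 1 = 2 * k) :
    chooseDivTwoPow k m = chooseDivTwoPow k (2 * k) := by
  rw [← h, succ_eq h]

lemma eq_central_iff :
    chooseDivTwoPow k m = chooseDivTwoPow k (2 * k) ↔ m = 2 * k ∨ m + 1 = 2 * k := by
  refine ⟨fun heq ↦ ?_, fun h ↦ h.elim (fun h ↦ h ▸ rfl) eq_central_of_add_one_eq⟩
  by_contra! h
  exact (lt_central h.1 h.2).ne heq

lemma le_central : chooseDivTwoPow k m ≤ chooseDivTwoPow k (2 * k) := by
  by_cases h : m = 2 * k ∨ m + 1 = 2 * k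
  · exact (eq_central_iff.mpr h).le
  · rw [not_or] at h
    exact (lt_central h.1 h.2).le

end chooseDivTwoPow

theorem stmt9 (j : ℕ) (hj : 2 ≤ j) (i : ℕ) (hi : 1 ≤ i) :
    (Nat.choose (i - 1) (j - 1) : ℚ) / 2 ^ i
      ≤ (Nat.choose (2 * j - 2) (j - 1) : ℚ) / 2 ^ (2 * j - 1) ∧
    ((Nat.choose (i - 1) (j - 1) : ℚ) / 2 ^ i
        = (Nat.choose (2 * j - 2) (j - 1) : ℚ) / 2 ^ (2 * j - 1)
      ↔ i = 2 * j - 1 ∨ i = 2 * j - 2) := by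
  obtain ⟨k, rfl⟩ : ∃ k, j = k + 1 := ⟨j - 1, by omega⟩
  obtain ⟨m, rfl⟩ : ∃ m, i = m + 1 := ⟨i - 1, by omega⟩
  have halve (n : ℕ) : (n.choose k : ℚ) / 2 ^ (n + 1) = chooseDivTwoPow k n / 2 := by
    rw [chooseDivTwoPow, pow_succ, div_div]
  have hcentral : 2 * (k + 1) - 1 = 2 * k + 1 := by omega
  simp only [Nat.add_sub_cancel]
  rw [hcentral, show 2 * (k + 1) - 2 = 2 * k by omega, halve, halve,
    div_le_div_iff_of_pos_right two_pos, div_left_inj' two_ne_zero,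
    chooseDivTwoPow.eq_central_iff]
  exact ⟨chooseDivTwoPow.le_central, by omega⟩
end

section
/- Let S₁(n) = 2 · ∑_{j=1}^{n/2 − m(n) − 1} C(2j−2, j−1)/2^(2j−1) for even n. Then, as n → ∞ through even integers, S₁(n) is asymptotic to √(2/π) · √(n − √n); that is, the ratio S₁(n) / (√(2/π) · √(n − √n)) tends to 1 as n → ∞ along even n. -/
/-!
Summing `C(2i, i) / 4^i` telescopes: `∑_{i ≤ k} C(2i, i) / 4^i = (2k + 1) C(2k, k) / 4^k`, so
`S₁(n) = (2K + 1) C(2K, K) / 4^K` with `K = n/2 - m(n) - 2`. Stirling's formula gives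
`C(2K, K) / 4^K ~ 1 / √(πK)`, hence `S₁(n) ~ √(2/π) √(2K)`, and `2K` stays within a bounded
distance of `n - √n` because `2 m(n) = √n + O(1)`.
-/

open Filter Real Asymptotics Finset

/-- `mval n = ⌈√(n-1)/2 - 1⌉`. -/
noncomputable def mval (n : ℕ) : ℕ := ⌈Real.sqrt ((n : ℝ) - 1) / 2 - 1⌉₊

/-- `S₁(n) = 2 ∑_{j=1}^{n/2 - m(n) - 1} C(2j-2, j-1) / 2^(2j-1)`. -/
noncomputable def S1 (n : ℕ) : ℝ :=
  2 * ∑ j ∈ Finset.Icc 1 (n / 2 - mval n - 1),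
      (Nat.choose (2 * j - 2) (j - 1) : ℝ) / 2 ^ (2 * j - 1)

theorem Asymptotics.isEquivalent_of_abs_sub_le {α : Type*} {l : Filter α} {u v : α → ℝ}
    {C : ℝ} (h : ∀ᶠ x in l, |u x - v x| ≤ C) (hv : Tendsto v l atTop) : u ~[l] v := by
  refine IsLittleO.isEquivalent <| IsBigO.trans_isLittleO (g := fun _ => (1 : ℝ)) ?_
    ((isLittleO_one_left_iff ℝ).2 (tendsto_norm_atTop_atTop.comp hv))
  exact IsBigO.of_bound C (h.mono fun x hx => by simpa using hx)

theorem Asymptotics.IsEquivalent.sqrt {α : Type*} {l : Filter α} {u v : α → ℝ} (hv : 0 ≤ v)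
    (h : u ~[l] v) : (fun x => √(u x)) ~[l] fun x => √(v x) := by
  simp only [Real.sqrt_eq_rpow]
  exact h.rpow hv

theorem tendsto_sub_sqrt_atTop : Tendsto (fun x : ℝ => x - √x) atTop atTop := by
  refine tendsto_atTop_mono' atTop ?_ (tendsto_atTop_add_const_right _ (-1) tendsto_sqrt_atTop)
  filter_upwards [eventually_ge_atTop 0] with x hx
  nlinarith [Real.sq_sqrt hx, sq_nonneg (√x - 1)]

theorem Real.sqrt_le_sqrt_sub_one_add_one (x : ℝ) : √x ≤ √(x - 1) + 1 := by
  rw [Real.sqrt_le_iff]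
  refine ⟨by positivity, ?_⟩
  nlinarith [Real.sq_sqrt' (x := x - 1), le_max_left (x - 1) 0, Real.sqrt_nonneg (x - 1)]

theorem Nat.sub_one_le_two_mul_cast_div_two (n : ℕ) : (n : ℝ) - 1 ≤ 2 * ((n / 2 : ℕ) : ℝ) := by
  have : (n : ℝ) ≤ 2 * ((n / 2 : ℕ) : ℝ) + 1 := by
    exact_mod_cast (by omega : n ≤ 2 * (n / 2) + 1)
  linarith

theorem sum_range_centralBinom_div_four_pow (k : ℕ) :
    ∑ i ∈ range (k + 1), (i.centralBinom : ℝ) / 4 ^ i =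
      (2 * k + 1) * k.centralBinom / 4 ^ k := by
  induction k with
  | zero => simp
  | succ k ih =>
    have h : ((k : ℝ) + 1) * (k + 1).centralBinom = 2 * (2 * k + 1) * k.centralBinom := by
      exact_mod_cast Nat.succ_mul_centralBinom_succ k
    rw [sum_range_succ, ih, pow_succ]
    field_simp
    push_cast
    linear_combination (-2) * h

theorem two_mul_sum_Icc_choose_div_two_pow (k : ℕ) :
    2 * ∑ j ∈ Icc 1 (k + 1), ((2 * j - 2).choose (j - 1) : ℝ) / 2 ^ (2 * j - 1) =
      (2 * k + 1) * k.centralBinom / 4 ^ k := by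
  rw [← sum_range_centralBinom_div_four_pow, mul_sum, ← Ico_add_one_right_eq_Icc,
    sum_Ico_eq_sum_range]
  refine sum_congr rfl fun i _ => ?_
  rw [show 2 * (1 + i) - 2 = 2 * i by omega, show 1 + i - 1 = i by omega,
    show 2 * (1 + i) - 1 = 2 * i + 1 by omega, ← Nat.centralBinom_eq_two_mul_choose, pow_succ,
    pow_mul]
  norm_num
  ring

theorem Nat.centralBinom_isEquivalent :
    (fun k : ℕ => (k.centralBinom : ℝ)) ~[atTop] fun k => 4 ^ k / √(π * k) := by
  have hnum := Stirling.factorial_isEquivalent_stirling.comp_tendsto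
    (tendsto_id.const_mul_atTop' two_pos : Tendsto (fun k : ℕ => 2 * k) atTop atTop)
  have hden := Stirling.factorial_isEquivalent_stirling.mul
    Stirling.factorial_isEquivalent_stirling
  refine ((hnum.div hden).congr_left ?_).congr_right ?_
  · refine Eventually.of_forall fun k => ?_
    simp only [Function.comp, Pi.div_apply, Pi.mul_apply]
    rw [Nat.centralBinom_eq_two_mul_choose, Nat.cast_choose ℝ (by omega : k ≤ 2 * k),
      show 2 * k - k = k by omega]
  · filter_upwards [eventually_ge_atTop 1] with k hk
    have hk : (0 : ℝ) < k := by exact_mod_cast hk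
    simp only [Function.comp, Pi.div_apply, Pi.mul_apply]
    have hsqrt : √(2 * ((2 * k : ℕ) : ℝ) * π) = 2 * √(π * k) := by
      rw [show 2 * ((2 * k : ℕ) : ℝ) * π = 2 ^ 2 * (π * k) by push_cast; ring,
        Real.sqrt_mul (by positivity), Real.sqrt_sq (by positivity)]
    have hpow : (((2 * k : ℕ) : ℝ) / exp 1) ^ (2 * k) =
        4 ^ k * ((k / exp 1) ^ k * (k / exp 1) ^ k) := by
      rw [← pow_add, ← two_mul, pow_mul, pow_mul, ← mul_pow]; push_cast; ring
    rw [hsqrt, hpow]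
    field_simp
    rw [Real.sq_sqrt (by positivity), Real.sq_sqrt (by positivity)]
    ring

theorem isEquivalent_odd_mul_centralBinom_div_four_pow :
    (fun k : ℕ => (2 * k + 1) * (k.centralBinom : ℝ) / 4 ^ k) ~[atTop]
      fun k => √(2 / π) * √(2 * k) := by
  have hodd : (fun k : ℕ => 2 * (k : ℝ) + 1) ~[atTop] fun k => 2 * (k : ℝ) :=
    isEquivalent_of_abs_sub_le (C := 1) (Eventually.of_forall fun k => by simp)
      (tendsto_natCast_atTop_atTop.const_mul_atTop two_pos)
  refine ((hodd.mul Nat.centralBinom_isEquivalent).div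
    (IsEquivalent.refl (u := fun k : ℕ => (4 : ℝ) ^ k))).congr_right ?_
  filter_upwards [eventually_ge_atTop 1] with k hk
  have hk : (0 : ℝ) < k := by exact_mod_cast hk
  simp only [Pi.div_apply, Pi.mul_apply]
  rw [← Real.sqrt_mul (by positivity), eq_comm,
    Real.sqrt_eq_iff_eq_sq (by positivity) (by positivity)]
  field_simp
  rw [Real.sq_sqrt (by positivity)]

theorem two_mul_mval_bounds (n : ℕ) : √n - 3 ≤ 2 * (mval n : ℝ) ∧ 2 * (mval n : ℝ) ≤ √n := by
  have hsub : √((n : ℝ) - 1) ≤ √n := Real.sqrt_le_sqrt (by linarith)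
  have hsub' := Real.sqrt_le_sqrt_sub_one_add_one n
  constructor
  · have := Nat.le_ceil (√((n : ℝ) - 1) / 2 - 1)
    unfold mval; linarith
  · rcases le_or_gt (√((n : ℝ) - 1) / 2 - 1) 0 with h | h
    · simp [mval, Nat.ceil_eq_zero.2 h]
    · have := Nat.ceil_lt_add_one h.le
      unfold mval; linarith

theorem eventually_mval_add_two_le_half : ∀ᶠ n : ℕ in atTop, mval n + 2 ≤ n / 2 := by
  filter_upwards [eventually_ge_atTop 9] with n hn
  have hn : (9 : ℝ) ≤ n := by exact_mod_cast hn
  have h3 : 3 ≤ √(n : ℝ) := Real.le_sqrt_of_sq_le (by linarith)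
  have hsq : √(n : ℝ) * √n = n := Real.mul_self_sqrt (by positivity)
  have hhalf := Nat.sub_one_le_two_mul_cast_div_two n
  have : ((mval n + 2 : ℕ) : ℝ) ≤ (n / 2 : ℕ) := by
    push_cast; nlinarith [(two_mul_mval_bounds n).2]
  exact_mod_cast this

-- The upper summation limit in `S1 n` is `S1Index n + 1` as soon as `mval n + 2 ≤ n / 2`.
noncomputable def S1Index (n : ℕ) : ℕ := n / 2 - mval n - 2

theorem S1_eq (n : ℕ) (h : mval n + 2 ≤ n / 2) :
    S1 n = (2 * S1Index n + 1) * ((S1Index n).centralBinom : ℝ) / 4 ^ S1Index n := by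
  rw [S1, S1Index, show n / 2 - mval n - 1 = (n / 2 - mval n - 2) + 1 by omega,
    two_mul_sum_Icc_choose_div_two_pow]

theorem abs_two_mul_S1Index_sub_le (n : ℕ) (h : mval n + 2 ≤ n / 2) :
    |2 * (S1Index n : ℝ) - (n - √n)| ≤ 5 := by
  obtain ⟨hlow, hup⟩ := two_mul_mval_bounds n
  have hhalf₁ := Nat.sub_one_le_two_mul_cast_div_two n
  have hhalf₂ : ((n / 2 : ℕ) : ℝ) ≤ n / 2 := Nat.cast_div_le
  rw [S1Index, Nat.cast_sub (by omega), Nat.cast_sub (by omega), abs_le]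
  push_cast
  constructor <;> linarith

theorem stmt12 :
    Tendsto (fun n : ℕ =>
        S1 n / (Real.sqrt (2 / Real.pi) * Real.sqrt ((n : ℝ) - Real.sqrt n)))
      (atTop ⊓ Filter.principal {n : ℕ | Even n}) (nhds 1) := by
  have hv : Tendsto (fun n : ℕ => (n : ℝ) - √n) atTop atTop :=
    tendsto_sub_sqrt_atTop.comp tendsto_natCast_atTop_atTop
  have hK : (fun n => 2 * (S1Index n : ℝ)) ~[atTop] fun n => (n : ℝ) - √n :=
    isEquivalent_of_abs_sub_le
      (eventually_mval_add_two_le_half.mono fun n h => abs_two_mul_S1Index_sub_le n h) hv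
  have hKtop : Tendsto S1Index atTop atTop := by
    refine (tendsto_natCast_atTop_iff (R := ℝ)).1 ?_
    simpa using (hK.symm.tendsto_atTop hv).atTop_div_const two_pos
  have hS : S1 ~[atTop] fun n : ℕ => √(2 / π) * √((n : ℝ) - √n) :=
    ((isEquivalent_odd_mul_centralBinom_div_four_pow.comp_tendsto hKtop).congr_left
      (eventually_mval_add_two_le_half.mono fun n h => (S1_eq n h).symm)).trans
      (IsEquivalent.refl.mul (hK.symm.sqrt fun n => by positivity).symm)
  refine ((isEquivalent_iff_tendsto_one ?_).1 hS).mono_left inf_le_left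
  filter_upwards [hv.eventually_gt_atTop 0] with n hn
  positivity
end

section
/- For every even integer n ≥ 6, writing m = m(n), one has C(2j−2, n−j)/2^(2j−2) ≤ C(n−2m−4, n/2+m+1)/2^(n−2m−4) for all 1 ≤ j ≤ n/2 − m − 1; that is, the maximum over 1 ≤ j ≤ n/2 − m − 1 of C(2j−2, n−j)/2^(2j−2) is attained at j = n/2 − m − 1 and equals C(n−2m−4, n/2+m+1)/2^(n−2m−4). -/
namespace Nat

theorem choose_add_add_three_mul (c e : ℕ) :
    (c + e + 3).choose c * ((e + 1) * (e + 2) * (e + 3))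
      = (c + e + 1).choose (c + 1) * ((c + 1) * (c + e + 2) * (c + e + 3)) := by
  have h3 : (c + e + 3).choose c * (e + 3) = (c + e + 2).choose c * (c + e + 3) := by
    simpa [show c + e + 3 - c = e + 3 by omega] using (choose_mul_succ_eq (c + e + 2) c).symm
  have h2 : (c + e + 2).choose c * (e + 2) = (c + e + 1).choose c * (c + e + 2) := by
    simpa [show c + e + 2 - c = e + 2 by omega] using (choose_mul_succ_eq (c + e + 1) c).symm
  have h1 : (c + e + 1).choose c * (e + 1) = (c + e + 1).choose (c + 1) * (c + 1) := by
    simpa [show c + e + 1 - c = e + 1 by omega] using (choose_succ_right_eq (c + e + 1) c).symm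
  calc (c + e + 3).choose c * ((e + 1) * (e + 2) * (e + 3))
      = (c + e + 3).choose c * (e + 3) * ((e + 1) * (e + 2)) := by ring
    _ = (c + e + 2).choose c * (e + 2) * ((e + 1) * (c + e + 3)) := by rw [h3]; ring
    _ = (c + e + 1).choose c * (e + 1) * ((c + e + 2) * (c + e + 3)) := by rw [h2]; ring
    _ = (c + e + 1).choose (c + 1) * ((c + 1) * (c + e + 2) * (c + e + 3)) := by rw [h1]; ring

theorem four_mul_choose_le_choose {k r : ℕ} (h : k < r) :
    4 * (2 * k).choose (r + 1) ≤ (2 * k + 2).choose r := by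
  rcases lt_or_ge (2 * k) (r + 1) with hlt | hle
  · simp [choose_eq_zero_of_lt hlt]
  obtain ⟨e, he⟩ := exists_add_of_le hle
  rw [show 2 * k + 2 = r + e + 3 by omega, show 2 * k = r + e + 1 by omega]
  have hratio : 4 * ((e + 1) * (e + 2) * (e + 3)) ≤ (r + 1) * (r + e + 2) * (r + e + 3) := by
    calc 4 * ((e + 1) * (e + 2) * (e + 3)) = (e + 1) * (2 * e + 4) * (2 * e + 6) := by ring
      _ ≤ (r + 1) * (r + e + 2) * (r + e + 3) :=
        Nat.mul_le_mul (Nat.mul_le_mul (by omega) (by omega)) (by omega)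
  refine le_of_mul_le_mul_right (a := (e + 1) * (e + 2) * (e + 3)) ?_ (by positivity)
  calc 4 * (r + e + 1).choose (r + 1) * ((e + 1) * (e + 2) * (e + 3))
      = (r + e + 1).choose (r + 1) * (4 * ((e + 1) * (e + 2) * (e + 3))) := by ring
    _ ≤ (r + e + 1).choose (r + 1) * ((r + 1) * (r + e + 2) * (r + e + 3)) := by gcongr
    _ = _ := (choose_add_add_three_mul r e).symm

end Nat

def binomTerm (n j : ℕ) : ℚ := ((2 * j - 2).choose (n - j) : ℚ) / 2 ^ (2 * j - 2)

theorem binomTerm_le_succ {n j : ℕ} (hj : 1 ≤ j) (hjn : 2 * j + 1 ≤ n) :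
    binomTerm n j ≤ binomTerm n (j + 1) := by
  obtain ⟨k, rfl⟩ := exists_add_of_le hj
  obtain ⟨r, rfl⟩ : ∃ r, n = k + r + 2 := ⟨n - k - 2, by omega⟩
  have hstep := Nat.four_mul_choose_le_choose (k := k) (r := r) (by omega)
  rw [binomTerm, binomTerm, show 2 * (1 + k) - 2 = 2 * k by omega,
    show 2 * (1 + k + 1) - 2 = 2 * k + 2 by omega, show k + r + 2 - (1 + k) = r + 1 by omega,
    show k + r + 2 - (1 + k + 1) = r by omega, div_le_div_iff₀ (by positivity) (by positivity),
    pow_add]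
  have : (4 * (2 * k).choose (r + 1) : ℚ) ≤ (2 * k + 2).choose r := by exact_mod_cast hstep
  nlinarith [pow_pos (two_pos : (0 : ℚ) < 2) (2 * k)]

theorem binomTerm_monotoneOn (n : ℕ) : MonotoneOn (binomTerm n) (Set.Icc 1 ((n + 1) / 2)) :=
  monotoneOn_of_le_add_one Set.ordConnected_Icc fun _ _ hj hj' =>
    binomTerm_le_succ hj.1 (by have := hj'.2; omega)

theorem mval_add_two_le {n : ℕ} (hn : 5 ≤ n) : mval n + 2 ≤ n / 2 := by
  suffices mval n ≤ n / 2 - 2 by omega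
  have hn' : (5 : ℝ) ≤ n := by exact_mod_cast hn
  have hhalf : ((n : ℝ) - 1) / 2 ≤ (n / 2 : ℕ) := by
    have : n ≤ 2 * (n / 2) + 1 := by omega
    have : (n : ℝ) ≤ 2 * (n / 2 : ℕ) + 1 := by exact_mod_cast this
    linarith
  have hsqrt : Real.sqrt ((n : ℝ) - 1) ≤ n - 3 :=
    (Real.sqrt_le_left (by linarith)).mpr (by nlinarith)
  refine Nat.ceil_le.mpr ?_
  rw [Nat.cast_sub (by omega)]
  push_cast
  linarith

theorem stmt13 (n : ℕ) (hn : 6 ≤ n) (heven : Even n) :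
    (∀ j, 1 ≤ j → j ≤ n / 2 - mval n - 1 →
      (Nat.choose (2 * j - 2) (n - j) : ℚ) / 2 ^ (2 * j - 2)
        ≤ (Nat.choose (n - 2 * mval n - 4) (n / 2 + mval n + 1) : ℚ)
            / 2 ^ (n - 2 * mval n - 4)) ∧
    (Nat.choose (2 * (n / 2 - mval n - 1) - 2) (n - (n / 2 - mval n - 1)) : ℚ)
        / 2 ^ (2 * (n / 2 - mval n - 1) - 2)
      = (Nat.choose (n - 2 * mval n - 4) (n / 2 + mval n + 1) : ℚ)
          / 2 ^ (n - 2 * mval n - 4) := by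
  have hm := mval_add_two_le (by omega : 5 ≤ n)
  obtain ⟨p, hp⟩ := heven
  have hJ : binomTerm n (n / 2 - mval n - 1)
      = ((n - 2 * mval n - 4).choose (n / 2 + mval n + 1) : ℚ) / 2 ^ (n - 2 * mval n - 4) := by
    rw [binomTerm, show 2 * (n / 2 - mval n - 1) - 2 = n - 2 * mval n - 4 by omega,
      show n - (n / 2 - mval n - 1) = n / 2 + mval n + 1 by omega]
  refine ⟨fun j hj hjJ => ?_, hJ⟩
  rw [← hJ]
  exact binomTerm_monotoneOn n ⟨hj, by omega⟩ ⟨by omega, by omega⟩ hjJ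
end

section
/- Let S₂(n) = 2 · ∑_{j=1}^{n/2 − m(n) − 1} C(2j−2, n−j)/2^(2j−1) for even n. Then the limit superior, as n → ∞ through even integers, of S₂(n) / √(n − √n) is at most e^(−2)/√(2π). -/
/-!
For `1 ≤ j ≤ n/2 - m(n) - 1` put `N = j - 1` and `D = n + 1 - 2j ≥ 2m(n) + 3 ≥ √n`; the `j`-th
summand of `S₂(n)` is then `C(2N, N + D) / 2^(2N+1)`. Consecutive binomial coefficients have ratio
`(N - D) / (N + D + 1) = (1 - x) / (1 + x) ≤ e^{-2x}` with `x = (2D + 1) / (2N + 1)`, which gives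
the Chernoff-type bound `C(2N, N + D) ≤ 2^(2N) e^{-2D²/(2N+1)}`. So the summands are bounded by
the Gaussian tail `e^{-2D²/n}`, which is dominated by a geometric series of ratio `e^{-8M/n}`,
`M = 2m(n) + 3`. Summing gives `S₂(n) ≤ e^{-2} (1 + √n / 8)`, and
`e^{-2} (1 + √n / 8) / √(n - √n) → e^{-2} / 8 < e^{-2} / √(2π)`.
-/

open Filter

/-- `S₂(n) = 2 ∑_{j=1}^{n/2 - m(n) - 1} C(2j-2, n-j) / 2^(2j-1)`. -/
noncomputable def S2 (n : ℕ) : ℝ :=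
  2 * ∑ j ∈ Finset.Icc 1 (n / 2 - mval n - 1),
      (Nat.choose (2 * j - 2) (n - j) : ℝ) / 2 ^ (2 * j - 1)

open Finset Real

theorem one_sub_le_one_add_mul_exp_neg_two_mul {x : ℝ} (hx₀ : 0 ≤ x) (hx₁ : x ≤ 1) :
    1 - x ≤ (1 + x) * exp (-(2 * x)) := by
  rcases hx₁.eq_or_lt with rfl | hx₁
  · simpa using (exp_pos _).le
  have hlog : 2 * x ≤ log (1 + x) - log (1 - x) := by
    have hs := hasSum_log_sub_log_of_abs_lt_one (abs_lt.2 ⟨by linarith, hx₁⟩)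
    simpa using le_hasSum hs 0 fun k _ => by positivity
  have h : (1 - x) * exp (2 * x) ≤ 1 + x := by
    rw [← le_div_iff₀' (by linarith), ← exp_log (by positivity : 0 < (1 + x) / (1 - x)),
      log_div (by linarith) (by linarith)]
    exact exp_le_exp.2 hlog
  rw [exp_neg, ← div_eq_mul_inv, le_div_iff₀ (exp_pos _)]
  exact h

theorem choose_two_mul_add_le_two_pow_mul_exp (N D : ℕ) :
    (Nat.choose (2 * N) (N + D) : ℝ) ≤ 2 ^ (2 * N) * exp (-(2 * D ^ 2 / (2 * N + 1))) := by
  induction D with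
  | zero => simpa using (Nat.cast_le (α := ℝ)).2 (Nat.choose_le_two_pow (2 * N) N)
  | succ D ih =>
    rcases le_or_gt N D with hND | hDN
    · rw [Nat.choose_eq_zero_of_lt (by omega), Nat.cast_zero]
      positivity
    set x : ℝ := (2 * D + 1) / (2 * N + 1)
    have hN : (0 : ℝ) < 2 * N + 1 := by positivity
    have hDN' : (D : ℝ) + 1 ≤ N := by exact_mod_cast hDN
    have hratio : (Nat.choose (2 * N) (N + D + 1) : ℝ) * (N + D + 1)
        = Nat.choose (2 * N) (N + D) * (N - D) := by
      have h := Nat.choose_succ_right_eq (2 * N) (N + D)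
      rw [show 2 * N - (N + D) = N - D by omega] at h
      have h' := congrArg (Nat.cast : ℕ → ℝ) h
      push_cast [Nat.cast_sub hDN.le] at h'
      exact h'
    have hstep : (N : ℝ) - D ≤ (N + D + 1) * exp (-(2 * x)) := by
      have h := one_sub_le_one_add_mul_exp_neg_two_mul (x := x) (by positivity)
        ((div_le_one hN).2 (by linarith))
      have e₁ : (N : ℝ) - D = (2 * N + 1) / 2 * (1 - x) := by simp only [x]; field_simp; ring
      have e₂ : (N : ℝ) + D + 1 = (2 * N + 1) / 2 * (1 + x) := by simp only [x]; field_simp; ring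
      rw [e₁, e₂, mul_assoc]
      gcongr
    have hexp : exp (-(2 * (D : ℝ) ^ 2 / (2 * N + 1))) * exp (-(2 * x))
        = exp (-(2 * ((D + 1 : ℕ) : ℝ) ^ 2 / (2 * N + 1))) := by
      rw [← exp_add]; congr 1; simp only [x]; push_cast; field_simp; ring
    rw [← hexp, ← mul_assoc, ← mul_le_mul_iff_of_pos_right (by positivity : (0 : ℝ) < N + D + 1),
      ← add_assoc, hratio]
    calc (Nat.choose (2 * N) (N + D) : ℝ) * (N - D)
        ≤ 2 ^ (2 * N) * exp (-(2 * D ^ 2 / (2 * N + 1))) * ((N + D + 1) * exp (-(2 * x))) :=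
          mul_le_mul ih hstep (by linarith) (by positivity)
      _ = _ := by ring

theorem two_mul_choose_div_two_pow_le (N D : ℕ) {x : ℝ} (hx : 2 * N + 1 ≤ x) :
    2 * ((Nat.choose (2 * N) (N + D) : ℝ) / 2 ^ (2 * N + 1)) ≤ exp (-(2 * D ^ 2 / x)) := by
  calc 2 * ((Nat.choose (2 * N) (N + D) : ℝ) / 2 ^ (2 * N + 1))
      = (Nat.choose (2 * N) (N + D) : ℝ) / 2 ^ (2 * N) := by rw [pow_succ]; field_simp
    _ ≤ exp (-(2 * D ^ 2 / (2 * N + 1))) := by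
      rw [div_le_iff₀' (by positivity)]; exact choose_two_mul_add_le_two_pow_mul_exp N D
    _ ≤ exp (-(2 * D ^ 2 / x)) := by gcongr

theorem one_div_one_sub_exp_neg_le {y : ℝ} (hy : 0 < y) :
    1 / (1 - exp (-y)) ≤ 1 + 1 / y := by
  have hy' := add_one_le_exp y
  have hinv : exp y * exp (-y) = 1 := by rw [← exp_add]; simp
  rw [div_le_iff₀ (by simpa using hy), one_add_div hy.ne', div_mul_eq_mul_div, le_div_iff₀ hy]
  nlinarith [exp_pos (-y)]

theorem sum_range_exp_neg_mul_sq_le {a M : ℝ} (ha : 0 < a) (hM : 0 < M) (J : ℕ) :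
    ∑ i ∈ range J, exp (-(a * (M + 2 * i) ^ 2)) ≤ exp (-(a * M ^ 2)) * (1 + 1 / (4 * a * M)) := by
  set ρ := exp (-(4 * a * M))
  have hρ : ρ < 1 := exp_lt_one_iff.2 (neg_lt_zero.2 (by positivity))
  have hterm (i : ℕ) : exp (-(a * (M + 2 * i) ^ 2)) ≤ exp (-(a * M ^ 2)) * ρ ^ i := by
    rw [← exp_nat_mul, ← exp_add, exp_le_exp]
    nlinarith [mul_nonneg ha.le (sq_nonneg (i : ℝ))]
  calc ∑ i ∈ range J, exp (-(a * (M + 2 * i) ^ 2))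
      ≤ ∑ i ∈ range J, exp (-(a * M ^ 2)) * ρ ^ i := sum_le_sum fun i _ => hterm i
    _ = exp (-(a * M ^ 2)) * ∑ i ∈ Ico 0 J, ρ ^ i := by rw [← mul_sum, range_eq_Ico]
    _ ≤ exp (-(a * M ^ 2)) * (1 / (1 - ρ)) := by
      gcongr
      simpa using geom_sum_Ico_le_of_lt_one (exp_pos _).le hρ (m := 0) (n := J)
    _ ≤ exp (-(a * M ^ 2)) * (1 + 1 / (4 * a * M)) := by
      gcongr
      exact one_div_one_sub_exp_neg_le (by positivity)

theorem sum_Icc_choose_div_two_pow_eq {n J c : ℕ} (hn : n = 2 * J + c) :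
    ∑ j ∈ Icc 1 J, (Nat.choose (2 * j - 2) (n - j) : ℝ) / 2 ^ (2 * j - 1)
      = ∑ i ∈ range J, (Nat.choose (2 * (J - 1 - i)) (J - 1 - i + (c + 1 + 2 * i)) : ℝ)
          / 2 ^ (2 * (J - 1 - i) + 1) := by
  rw [← Ico_add_one_right_eq_Icc, sum_Ico_eq_sum_range, ← sum_range_reflect, Nat.add_sub_cancel]
  refine sum_congr rfl fun i hi => ?_
  have hi : i < J := mem_range.1 hi
  congr 3 <;> omega

theorem sqrt_le_two_mul_mval_add_three (n : ℕ) : √n ≤ 2 * mval n + 3 := by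
  have hm : √((n : ℝ) - 1) / 2 - 1 ≤ mval n := Nat.le_ceil _
  have hs : √(n : ℝ) ≤ √((n : ℝ) - 1) + 1 := by
    rcases Nat.eq_zero_or_pos n with rfl | hn
    · simp only [CharP.cast_eq_zero, sqrt_zero]; positivity
    have hn' : (1 : ℝ) ≤ n := by exact_mod_cast hn
    rw [sqrt_le_left (by positivity)]
    nlinarith [sq_sqrt (by linarith : (0 : ℝ) ≤ n - 1), sqrt_nonneg ((n : ℝ) - 1)]
  linarith

theorem S2_le_of_even {n : ℕ} (hn : Even n) : S2 n ≤ exp (-2) * (1 + √n / 8) := by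
  rw [S2]
  set m := mval n
  set J := n / 2 - m - 1
  rcases Nat.eq_zero_or_pos J with hJ | hJ
  · rw [hJ, Icc_eq_empty_of_lt zero_lt_one, sum_empty, mul_zero]; positivity
  have hnJ : n = 2 * J + (2 * m + 2) := by rw [Nat.even_iff] at hn; omega
  have hn₀ : (0 : ℝ) < n := by exact_mod_cast (by omega : 0 < n)
  set M : ℝ := 2 * m + 3
  have hM : √n ≤ M := sqrt_le_two_mul_mval_add_three n
  have hM₀ : 0 < M := by positivity
  have hnM : (n : ℝ) ≤ M ^ 2 := by
    nlinarith [sq_sqrt hn₀.le, sqrt_nonneg (n : ℝ)]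
  have hexp : exp (-(2 / n * M ^ 2)) ≤ exp (-2) := by
    rw [exp_le_exp, neg_le_neg_iff, div_mul_eq_mul_div, le_div_iff₀ hn₀]; linarith
  have hgeom : 1 / (4 * (2 / n) * M) ≤ √n / 8 := by
    rw [show 4 * (2 / (n : ℝ)) * M = 8 * M / n by ring, one_div_div,
      div_le_div_iff₀ (by positivity) (by norm_num)]
    nlinarith [mul_self_sqrt hn₀.le, mul_le_mul_of_nonneg_left hM (sqrt_nonneg (n : ℝ))]
  rw [sum_Icc_choose_div_two_pow_eq hnJ, mul_sum]
  calc _ ≤ ∑ i ∈ range J, exp (-(2 / n * (M + 2 * i) ^ 2)) := by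
        refine sum_le_sum fun i hi => ?_
        have hi : i < J := mem_range.1 hi
        have hx : (2 * (J - 1 - i : ℕ) + 1 : ℝ) ≤ n := by exact_mod_cast (by omega)
        refine (two_mul_choose_div_two_pow_le _ _ hx).trans_eq ?_
        congr 2
        simp only [M]; push_cast; ring
    _ ≤ exp (-(2 / n * M ^ 2)) * (1 + 1 / (4 * (2 / n) * M)) :=
        sum_range_exp_neg_mul_sq_le (by positivity) hM₀ J
    _ ≤ exp (-2) * (1 + √n / 8) := by gcongr

theorem S2_nonneg (n : ℕ) : 0 ≤ S2 n := by
  rw [S2]; positivity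

theorem one_add_sqrt_div_eight_mul_sqrt_two_pi_le {x : ℝ} (hx : 25 ≤ x) :
    (1 + √x / 8) * √(2 * π) ≤ √(x - √x) := by
  have ht : 5 ≤ √x := by rw [le_sqrt (by norm_num) (by linarith)]; linarith
  have hsq : √x ^ 2 = x := sq_sqrt (by linarith)
  rw [le_sqrt (by positivity) (by nlinarith), mul_pow, sq_sqrt (by positivity)]
  nlinarith [mul_le_mul_of_nonneg_left pi_lt_d2.le (sq_nonneg (1 + √x / 8))]

instance atTop_inf_principal_even_neBot : (atTop ⊓ 𝓟 {n : ℕ | Even n}).NeBot := by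
  rw [← frequently_mem_iff_neBot, frequently_atTop]
  exact fun a => ⟨2 * a, by omega, even_two_mul a⟩

theorem stmt14 :
    Filter.limsup (fun n : ℕ => S2 n / Real.sqrt ((n : ℝ) - Real.sqrt n))
        (atTop ⊓ Filter.principal {n : ℕ | Even n})
      ≤ Real.exp (-2) / Real.sqrt (2 * Real.pi) := by
  refine limsup_le_of_le (isCoboundedUnder_le_of_le _ fun n => by
    have := S2_nonneg n; positivity) ?_
  rw [eventually_inf_principal]
  filter_upwards [eventually_ge_atTop 25] with n hn heven
  have hn : (25 : ℝ) ≤ n := by exact_mod_cast hn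
  have hw : 0 < √(n - √n) := lt_of_lt_of_le (by positivity)
    (one_add_sqrt_div_eight_mul_sqrt_two_pi_le hn)
  calc S2 n / √(n - √n) ≤ exp (-2) * (1 + √n / 8) / √(n - √n) := by
        gcongr; exact S2_le_of_even heven
    _ ≤ exp (-2) / √(2 * π) := by
        rw [div_le_div_iff₀ hw (by positivity), mul_assoc]
        gcongr
        exact one_add_sqrt_div_eight_mul_sqrt_two_pi_le hn
end

section
/- For every integer n ≥ 1 and every function b from {1,…,n} to {top, bottom}, the map i ↦ pos(i, b) is a bijection of {1,…,n}; moreover the sequence of cards read from the top of the shuffled deck is increasing before the position of card n and decreasing after it: for all cards i₁ ≠ i₂, if pos(i₁,b) < pos(i₂,b) ≤ pos(n,b) then i₁ < i₂, and if pos(n,b) ≤ pos(i₁,b) < pos(i₂,b) then i₁ > i₂. In particular the permutation of the cards has at most one descent, located immediately after card n. -/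
section SideCount

variable (b : ℕ → Bool)

def sideCount (v : Bool) (i : ℕ) : ℕ :=
  ((Finset.Ico 1 i).filter (fun k => b k = v)).card

variable {b}

lemma sideCount_lt_of_lt {v : Bool} {i j : ℕ} (hi : 1 ≤ i) (hij : i < j) (hb : b i = v) :
    sideCount b v i < sideCount b v j := by
  refine Finset.card_lt_card (Finset.ssubset_iff_of_subset ?_ |>.2 ⟨i, ?_, ?_⟩)
  · exact Finset.filter_subset_filter _ (Finset.Ico_subset_Ico le_rfl hij.le)
  · simp [hi, hij, hb]
  · simp

variable (b)

lemma sideCount_true_add_false (i : ℕ) : sideCount b true i + sideCount b false i = i - 1 := by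
  simpa [sideCount, Nat.card_Ico] using
    Finset.card_filter_add_card_filter_not (s := Finset.Ico 1 i) (p := fun k => b k = true)

end SideCount

lemma shelfPos_eq (n : ℕ) (b : ℕ → Bool) (i : ℕ) :
    shelfPos n b i = if b i then sideCount b true i + 1 else n - sideCount b false i :=
  rfl

/-- Top cards get keys in `[1, n]` and bottom cards keys in `[n + 2, 2n + 1]`, decreasing in
the card, so that the deck read from the top lists the cards by increasing key. -/
def shelfKey (n : ℕ) (b : ℕ → Bool) (i : ℕ) : ℕ :=
  if b i then i else 2 * n + 2 - i

section ShelfKey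

variable {n : ℕ} (b : ℕ → Bool) {i j : ℕ}

lemma shelfPos_lt_of_shelfKey_lt (hi : i ∈ Set.Icc 1 n) (hj : j ∈ Set.Icc 1 n)
    (h : shelfKey n b i < shelfKey n b j) : shelfPos n b i < shelfPos n b j := by
  rw [Set.mem_Icc] at hi hj
  have htot := sideCount_true_add_false b (n + 1)
  rw [shelfKey, shelfKey] at h
  rw [shelfPos_eq, shelfPos_eq]
  cases hbi : b i <;> cases hbj : b j <;> simp only [hbi, hbj, if_true, Bool.false_eq_true,
    if_false] at h ⊢
  · have := sideCount_lt_of_lt hj.1 (show j < i by omega) hbj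
    have := sideCount_lt_of_lt hi.1 (show i < n + 1 by omega) hbi
    omega
  · omega
  · have := sideCount_lt_of_lt hi.1 (show i < n + 1 by omega) hbi
    have := sideCount_lt_of_lt hj.1 (show j < n + 1 by omega) hbj
    omega
  · have := sideCount_lt_of_lt hi.1 h hbi
    omega

lemma shelfKey_injOn : Set.InjOn (shelfKey n b) (Set.Icc 1 n) := by
  intro i hi j hj h
  rw [Set.mem_Icc] at hi hj
  simp only [shelfKey] at h
  split_ifs at h <;> omega

lemma shelfPos_lt_shelfPos_iff (hi : i ∈ Set.Icc 1 n) (hj : j ∈ Set.Icc 1 n) :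
    shelfPos n b i < shelfPos n b j ↔ shelfKey n b i < shelfKey n b j := by
  refine ⟨fun h => ?_, shelfPos_lt_of_shelfKey_lt b hi hj⟩
  rcases lt_trichotomy (shelfKey n b i) (shelfKey n b j) with hlt | heq | hgt
  · exact hlt
  · rw [shelfKey_injOn b hi hj heq] at h
    exact absurd h (lt_irrefl _)
  · exact absurd (shelfPos_lt_of_shelfKey_lt b hj hi hgt) h.not_gt

lemma shelfPos_le_shelfPos_iff (hi : i ∈ Set.Icc 1 n) (hj : j ∈ Set.Icc 1 n) :
    shelfPos n b i ≤ shelfPos n b j ↔ shelfKey n b i ≤ shelfKey n b j := by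
  rw [← not_lt, ← not_lt, shelfPos_lt_shelfPos_iff b hj hi]

lemma shelfPos_injOn : Set.InjOn (shelfPos n b) (Set.Icc 1 n) := by
  intro i hi j hj h
  refine shelfKey_injOn b hi hj (le_antisymm ?_ ?_)
  · exact (shelfPos_le_shelfPos_iff b hi hj).1 h.le
  · exact (shelfPos_le_shelfPos_iff b hj hi).1 h.ge

end ShelfKey

lemma shelfPos_mapsTo (n : ℕ) (b : ℕ → Bool) :
    Set.MapsTo (shelfPos n b) (Set.Icc 1 n) (Set.Icc 1 n) := by
  intro i hi
  rw [Set.mem_Icc] at hi ⊢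
  have htot := sideCount_true_add_false b (n + 1)
  rw [shelfPos_eq]
  cases hbi : b i <;> simp only [if_true, Bool.false_eq_true, if_false]
  · have := sideCount_true_add_false b i
    omega
  · have := sideCount_lt_of_lt hi.1 (show i < n + 1 by omega) hbi
    omega

theorem stmt17 (n : ℕ) (hn : 1 ≤ n) (b : ℕ → Bool) :
    Set.BijOn (shelfPos n b) (Set.Icc 1 n) (Set.Icc 1 n) ∧
    (∀ i₁ ∈ Set.Icc 1 n, ∀ i₂ ∈ Set.Icc 1 n, i₁ ≠ i₂ →
      shelfPos n b i₁ < shelfPos n b i₂ → shelfPos n b i₂ ≤ shelfPos n b n →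
      i₁ < i₂) ∧
    (∀ i₁ ∈ Set.Icc 1 n, ∀ i₂ ∈ Set.Icc 1 n, i₁ ≠ i₂ →
      shelfPos n b n ≤ shelfPos n b i₁ → shelfPos n b i₁ < shelfPos n b i₂ →
      i₁ > i₂) := by
  have hn' : n ∈ Set.Icc 1 n := Set.right_mem_Icc.2 hn
  refine ⟨((Set.finite_Icc 1 n).injOn_iff_bijOn_of_mapsTo (shelfPos_mapsTo n b)).1
    (shelfPos_injOn b), ?_, ?_⟩
  · intro i₁ h₁ i₂ h₂ hne hlt hle
    rw [shelfPos_lt_shelfPos_iff b h₁ h₂] at hlt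
    rw [shelfPos_le_shelfPos_iff b h₂ hn'] at hle
    rw [Set.mem_Icc] at h₁ h₂
    simp only [shelfKey] at hlt hle
    split_ifs at hlt hle <;> omega
  · intro i₁ h₁ i₂ h₂ hne hle hlt
    rw [shelfPos_lt_shelfPos_iff b h₁ h₂] at hlt
    rw [shelfPos_le_shelfPos_iff b hn' h₁] at hle
    rw [Set.mem_Icc] at h₁ h₂
    simp only [shelfKey] at hlt hle
    split_ifs at hlt hle <;> omega
end

section
/- For every integer n ≥ 2, define τ(b) = min(pos(n−1, b), pos(n, b)), the first position at which card n−1 or card n appears. Then for every 1 ≤ k ≤ n−1, the number of functions b from {1,…,n} to {top, bottom} with τ(b) = k equals 4 · C(n−2, k−1). Equivalently, under the uniform distribution on b, the random variable τ − 1 has the Binomial(n−2, 1/2) distribution; in particular the expected value of τ is n/2. -/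
/-- `tau n b` is the first position at which card `n-1` or card `n` appears. -/
def tau (n : ℕ) (b : ℕ → Bool) : ℕ :=
  min (shelfPos n b (n - 1)) (shelfPos n b n)

open Finset

section topCount

variable {ι : Type*} [Fintype ι]

def topCount (f : ι → Bool) : ℕ := #{i | f i = true}

theorem topCount_add_topCount_not (f : ι → Bool) :
    topCount f + topCount (fun i => !f i) = Fintype.card ι := by
  simpa [topCount] using card_filter_add_card_filter_not (s := univ) (fun i => f i = true)

theorem card_filter_topCount_eq [DecidableEq ι] (t : ℕ) :
    #{f : ι → Bool | topCount f = t} = (Fintype.card ι).choose t := by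
  rw [← card_univ, ← card_powersetCard]
  refine card_nbij' (fun f => ({i | f i = true} : Finset ι)) (fun s i => decide (i ∈ s))
    ?_ ?_ ?_ ?_
  · intro f hf
    simp only [coe_filter, mem_coe] at hf ⊢
    simpa [mem_powersetCard, topCount] using hf.2
  · intro s hs
    simp only [coe_filter, mem_coe] at hs ⊢
    simpa [mem_powersetCard, topCount] using hs
  · intro f _
    funext i
    simp
  · intro s _
    ext i
    simp

theorem two_mul_sum_topCount [DecidableEq ι] :
    2 * ∑ f : ι → Bool, topCount f = Fintype.card ι * 2 ^ Fintype.card ι := by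
  have hflip : ∑ f : ι → Bool, topCount (fun i => !f i) = ∑ f : ι → Bool, topCount f :=
    Fintype.sum_bijective _ (Function.Involutive.bijective fun f => by simp) _ _ fun _ => rfl
  calc 2 * ∑ f : ι → Bool, topCount f
      = ∑ f : ι → Bool, (topCount f + topCount (fun i => !f i)) := by
        rw [sum_add_distrib, hflip, two_mul]
    _ = Fintype.card ι * 2 ^ Fintype.card ι := by
        simp [topCount_add_topCount_not, mul_comm]

end topCount

theorem tau_eq_card_top_add_one {n : ℕ} (hn : 2 ≤ n) (b : ℕ → Bool) :
    tau n b = #{k ∈ Ico 1 (n - 1) | b k = true} + 1 := by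
  have hsplit : Ico 1 n = insert (n - 1) (Ico 1 (n - 1)) := by
    ext k; simp only [mem_Ico, mem_insert]; omega
  have hlast : n - 1 ∉ Ico 1 (n - 1) := by simp
  have htotal : #{k ∈ Ico 1 (n - 1) | b k = true} + #{k ∈ Ico 1 (n - 1) | b k = false}
      = n - 2 := by
    simpa [Nat.card_Ico, Nat.sub_sub] using
      card_filter_add_card_filter_not (s := Ico 1 (n - 1)) (fun k => b k = true)
  unfold tau shelfPos
  rw [hsplit, filter_insert, filter_insert]
  cases b (n - 1) <;> cases b n <;> simp [card_insert_of_notMem, hlast] <;> omega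

theorem tau_extFn_append (m : ℕ) (f : Fin m → Bool) (g : Fin 2 → Bool) :
    tau (m + 2) (extFn (m + 2) (Fin.append f g)) = topCount f + 1 := by
  rw [tau_eq_card_top_add_one (by omega), card_filter, sum_Ico_eq_sum_range,
    show m + 2 - 1 - 1 = m by omega,
    ← Fin.sum_univ_eq_sum_range
      (fun k => if extFn (m + 2) (Fin.append f g) (1 + k) then 1 else 0),
    topCount, card_filter]
  congr 2
  funext i
  have happend : extFn (m + 2) (Fin.append f g) (1 + i) = f i := by
    have hi : 1 + (i : ℕ) - 1 < m + 2 := by omega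
    rw [extFn, dif_pos hi, show (⟨1 + i - 1, hi⟩ : Fin (m + 2)) = Fin.castAdd 2 i from
      Fin.ext (by simp), Fin.append_left]
  simp [happend]

theorem card_filter_tau_extFn_eq (m t : ℕ) :
    #{b : Fin (m + 2) → Bool | tau (m + 2) (extFn (m + 2) b) = t + 1} = 4 * m.choose t := by
  have hprod :
      #(({f : Fin m → Bool | topCount f = t} : Finset _) ×ˢ (univ : Finset (Fin 2 → Bool)))
        = #{b : Fin (m + 2) → Bool | tau (m + 2) (extFn (m + 2) b) = t + 1} :=
    card_equiv (Fin.appendEquiv m 2) fun fg => by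
      simp [show Fin.appendEquiv m 2 fg = Fin.append fg.1 fg.2 from rfl, tau_extFn_append]
  rw [← hprod, card_product, card_filter_topCount_eq, Fintype.card_fin, card_univ]
  simp [mul_comm]

theorem two_mul_sum_tau_extFn (m : ℕ) :
    2 * ∑ b : Fin (m + 2) → Bool, tau (m + 2) (extFn (m + 2) b) = (m + 2) * 2 ^ (m + 2) := by
  have hsum : ∑ b : Fin (m + 2) → Bool, tau (m + 2) (extFn (m + 2) b)
      = 4 * ∑ f : Fin m → Bool, (topCount f + 1) := by
    rw [← Fintype.sum_equiv (Fin.appendEquiv m 2)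
      (fun fg => tau (m + 2) (extFn (m + 2) (Fin.append fg.1 fg.2))) _ fun _ => rfl,
      Fintype.sum_prod_type]
    simp [tau_extFn_append, mul_sum]
  have htop := two_mul_sum_topCount (ι := Fin m)
  rw [Fintype.card_fin] at htop
  simp only [hsum, sum_add_distrib, sum_const, card_univ, Fintype.card_pi, Fintype.card_bool,
    prod_const, Fintype.card_fin, smul_eq_mul]
  linear_combination 4 * htop

theorem stmt18 (n : ℕ) (hn : 2 ≤ n) :
    (∀ k, 1 ≤ k → k ≤ n - 1 →
      ((Finset.univ : Finset (Fin n → Bool)).filter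
          (fun b => tau n (extFn n b) = k)).card = 4 * Nat.choose (n - 2) (k - 1)) ∧
    (∑ b : Fin n → Bool, (tau n (extFn n b) : ℚ)) / 2 ^ n = n / 2 := by
  obtain ⟨m, rfl⟩ : ∃ m, n = m + 2 := ⟨n - 2, by omega⟩
  refine ⟨fun k hk _ => ?_, ?_⟩
  · obtain ⟨t, rfl⟩ : ∃ t, k = t + 1 := ⟨k - 1, by omega⟩
    simpa using card_filter_tau_extFn_eq m t
  · have hsum : 2 * ∑ b : Fin (m + 2) → Bool, (tau (m + 2) (extFn (m + 2) b) : ℚ)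
        = (m + 2) * 2 ^ (m + 2) := by
      exact_mod_cast two_mul_sum_tau_extFn m
    rw [div_eq_div_iff (by positivity) two_ne_zero]
    push_cast
    linear_combination hsum
end

section
/- For every integer n ≥ 2, let r_j(b) denote the unique card i with pos(i,b) = j (with the convention r_0(b) = 0), let τ(b) = min(pos(n−1,b), pos(n,b)), and let N(b) = (n − τ(b)) + #{1 ≤ j ≤ τ(b) : r_j(b) = r_{j−1}(b) + 1}. Then the sum of N(b) over all 2^n functions b equals 3n · 2^(n−2); equivalently, the expected value of N under the uniform distribution on b is 3n/4. (N(b) is exactly the number of correct guesses under the optimal complete-feedback strategy: guess card 1 first, then always guess the card immediately following the previously shown card, and once card n−1 or n has appeared guess the remaining cards in descending order, which is then always correct.) -/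
/-- `rCard n b j` is the unique card `i ∈ {1,…,n}` with `shelfPos n b i = j`
(and `0` if there is none; in particular `rCard n b 0 = 0`). -/
def rCard (n : ℕ) (b : ℕ → Bool) (j : ℕ) : ℕ :=
  ∑ i ∈ Finset.Icc 1 n, if shelfPos n b i = j then i else 0

/-- The number of correct guesses under the optimal complete-feedback strategy:
all `n - τ` positions after `τ` are guessed correctly, and position `j ≤ τ` is guessed
correctly exactly when `r_j = r_{j-1} + 1`. -/
def correctGuesses (n : ℕ) (b : ℕ → Bool) : ℕ :=
  (n - tau n b) +
    ((Finset.Icc 1 (tau n b)).filter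
      (fun j => rCard n b j = rCard n b (j - 1) + 1)).card

/-!
Cards sent to the top occupy positions `1, 2, …` in increasing order and cards sent to the
bottom occupy positions `n, n - 1, …`. Hence `τ - 1` is the number `T` of top cards among
`1, …, n - 2`, and for `j ≤ τ` the guess at position `j` is correct exactly when the card shown
there is a top card `k` with `k = 1` or `k - 1` also on top. So
`N(b) = 1 + #{k ≤ n - 2 | b k = bottom} + #{k ≤ n - 1 | b k = top ∧ (k = 1 ∨ b (k - 1) = top)}`,
and linearity of expectation gives `1 + (n - 2)/2 + 1/2 + (n - 2)/4 = 3n/4`.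
-/

open Finset

lemma card_filter_forall_mem_eq {ι β : Type*} [Fintype ι] [DecidableEq ι] [Fintype β]
    [DecidableEq β] (S : Finset ι) (c : ι → β) :
    #{f : ι → β | ∀ k ∈ S, f k = c k} = Fintype.card β ^ (Fintype.card ι - #S) := by
  have hpi : ({f : ι → β | ∀ k ∈ S, f k = c k} : Finset (ι → β)) =
      Fintype.piFinset fun k => if k ∈ S then {c k} else univ := by
    ext f
    simp only [mem_filter, mem_univ, true_and, Fintype.mem_piFinset]
    refine forall_congr' fun k => ?_
    split_ifs with hk <;> simp [hk]
  rw [hpi, Fintype.card_piFinset]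
  simp [apply_ite, prod_ite, filter_notMem_eq_sdiff, card_univ_sdiff]

namespace ShelfShuffle

section Counting

variable (b : ℕ → Bool)

def topsBefore (i : ℕ) : ℕ := #{k ∈ Ico 1 i | b k = true}

def bottomsBefore (i : ℕ) : ℕ := #{k ∈ Ico 1 i | b k = false}

variable {b}

lemma topsBefore_add_bottomsBefore (i : ℕ) : topsBefore b i + bottomsBefore b i = i - 1 := by
  have h := card_filter_add_card_filter_not (s := Ico 1 i) (p := fun k => b k = true)
  simp only [Bool.not_eq_true, Nat.card_Ico] at h
  rw [topsBefore, bottomsBefore, h]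

lemma topsBefore_succ {i : ℕ} (hi : 1 ≤ i) :
    topsBefore b (i + 1) = topsBefore b i + if b i then 1 else 0 := by
  simp only [topsBefore, card_filter, sum_Ico_succ_top hi]

lemma bottomsBefore_succ {i : ℕ} (hi : 1 ≤ i) :
    bottomsBefore b (i + 1) = bottomsBefore b i + if b i then 0 else 1 := by
  simp only [bottomsBefore, card_filter, sum_Ico_succ_top hi]
  cases b i <;> rfl

lemma topsBefore_mono : Monotone (topsBefore b) := fun _ _ h =>
  card_le_card (filter_subset_filter _ (Ico_subset_Ico le_rfl h))

lemma bottomsBefore_mono : Monotone (bottomsBefore b) := fun _ _ h =>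
  card_le_card (filter_subset_filter _ (Ico_subset_Ico le_rfl h))

lemma topsBefore_lt_of_lt {i j : ℕ} (hi : 1 ≤ i) (hij : i < j) (h : b i = true) :
    topsBefore b i < topsBefore b j := by
  have := topsBefore_mono (b := b) (Nat.succ_le_of_lt hij)
  rw [topsBefore_succ hi, h, if_pos rfl] at this
  omega

lemma bottomsBefore_lt_of_lt {i j : ℕ} (hi : 1 ≤ i) (hij : i < j) (h : b i = false) :
    bottomsBefore b i < bottomsBefore b j := by
  have := bottomsBefore_mono (b := b) (Nat.succ_le_of_lt hij)
  rw [bottomsBefore_succ hi, h, if_neg Bool.false_ne_true] at this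
  omega

end Counting

variable {n : ℕ} {b : ℕ → Bool}

lemma shelfPos_of_top {i : ℕ} (h : b i = true) : shelfPos n b i = topsBefore b i + 1 := by
  simp [shelfPos, topsBefore, h]

lemma shelfPos_of_bottom {i : ℕ} (h : b i = false) : shelfPos n b i = n - bottomsBefore b i := by
  simp [shelfPos, bottomsBefore, h]

lemma shelfPos_mem_Icc {i : ℕ} (hi : i ∈ Icc 1 n) : shelfPos n b i ∈ Icc 1 n := by
  rw [mem_Icc] at hi ⊢
  have := topsBefore_add_bottomsBefore (b := b) i
  cases h : b i
  · rw [shelfPos_of_bottom h]; omega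
  · rw [shelfPos_of_top h]; omega

/-- Top cards fill the positions `1, 2, …` in increasing order and bottom cards the positions
`n, n - 1, …`, so the two blocks never meet. -/
lemma shelfPos_ne_of_lt {i j : ℕ} (hi : 1 ≤ i) (hij : i < j) (hj : j ≤ n) :
    shelfPos n b i ≠ shelfPos n b j := by
  have hj_split := topsBefore_add_bottomsBefore (b := b) j
  cases hbi : b i <;> cases hbj : b j
  · have := bottomsBefore_lt_of_lt hi hij hbi
    rw [shelfPos_of_bottom hbi, shelfPos_of_bottom hbj]; omega
  · have := bottomsBefore_lt_of_lt hi hij hbi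
    rw [shelfPos_of_bottom hbi, shelfPos_of_top hbj]; omega
  · have := topsBefore_lt_of_lt hi hij hbi
    rw [shelfPos_of_top hbi, shelfPos_of_bottom hbj]; omega
  · have := topsBefore_lt_of_lt hi hij hbi
    rw [shelfPos_of_top hbi, shelfPos_of_top hbj]; omega

lemma shelfPos_injOn : Set.InjOn (shelfPos n b) (Icc 1 n : Finset ℕ) := by
  intro i hi j hj hij
  simp only [coe_Icc, Set.mem_Icc] at hi hj
  by_contra hne
  rcases Nat.lt_or_gt_of_ne hne with h | h
  · exact shelfPos_ne_of_lt hi.1 h hj.2 hij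
  · exact shelfPos_ne_of_lt hj.1 h hi.2 hij.symm

lemma shelfPos_bijOn : Set.BijOn (shelfPos n b) (Icc 1 n : Finset ℕ) (Icc 1 n : Finset ℕ) :=
  (Finset.finite_toSet _).injOn_iff_bijOn_of_mapsTo (fun _ hi => shelfPos_mem_Icc hi)
    |>.mp shelfPos_injOn

lemma rCard_shelfPos {i : ℕ} (hi : i ∈ Icc 1 n) : rCard n b (shelfPos n b i) = i := by
  rw [rCard, sum_eq_single_of_mem i hi (fun k hk hki => if_neg (shelfPos_injOn.ne hk hi hki)),
    if_pos rfl]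

lemma rCard_of_notMem {j : ℕ} (hj : j ∉ Icc 1 n) : rCard n b j = 0 :=
  sum_eq_zero fun i hi => if_neg fun h : shelfPos n b i = j => hj (h ▸ shelfPos_mem_Icc hi)

lemma rCard_zero : rCard n b 0 = 0 := rCard_of_notMem (by simp)

lemma rCard_eq_iff {i j : ℕ} (hi : i ∈ Icc 1 n) : rCard n b j = i ↔ shelfPos n b i = j := by
  refine ⟨fun h => ?_, fun h => h ▸ rCard_shelfPos hi⟩
  by_cases hj : j ∈ Icc 1 n
  · obtain ⟨i', hi', rfl⟩ := (shelfPos_bijOn (b := b)).surjOn hj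
    rw [← h, rCard_shelfPos hi']
  · rw [rCard_of_notMem hj] at h
    simp [← h] at hi

lemma card_filter_Icc_eq_card_filter_shelfPos {τ : ℕ} (hτ : τ ≤ n) (P : ℕ → Prop)
    [DecidablePred P] :
    #{j ∈ Icc 1 τ | P j} = #{i ∈ Icc 1 n | shelfPos n b i ≤ τ ∧ P (shelfPos n b i)} := by
  symm
  refine card_nbij (shelfPos n b) (fun i hi => ?_) (shelfPos_injOn.mono fun i hi => ?_)
    (fun j hj => ?_)
  · rw [mem_coe, mem_filter] at hi ⊢
    have := mem_Icc.1 (shelfPos_mem_Icc (b := b) hi.1)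
    exact ⟨mem_Icc.2 ⟨this.1, hi.2.1⟩, hi.2.2⟩
  · exact (mem_filter.1 hi).1
  · rw [mem_coe, mem_filter, mem_Icc] at hj
    obtain ⟨i, hi, rfl⟩ := (shelfPos_bijOn (b := b)).surjOn (mem_Icc.2 ⟨hj.1.1, hj.1.2.trans hτ⟩)
    exact ⟨i, mem_filter.2 ⟨hi, hj.1.2, hj.2⟩, rfl⟩

/-- Top cards appear in increasing order, and a bottom card `k - 1` lies below every top card. -/
lemma rCard_pred_shelfPos_add_one_iff {k : ℕ} (hk : k ∈ Icc 1 n) (h : b k = true) :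
    rCard n b (shelfPos n b k - 1) + 1 = k ↔ k = 1 ∨ b (k - 1) = true := by
  rw [shelfPos_of_top h, Nat.add_sub_cancel]
  rw [mem_Icc] at hk
  rcases eq_or_ne k 1 with rfl | hk1
  · simp [topsBefore, rCard_zero]
  have hprev : k - 1 ∈ Icc 1 n := mem_Icc.2 ⟨by omega, by omega⟩
  have hsucc := topsBefore_succ (b := b) (i := k - 1) (by omega)
  have hsplit := topsBefore_add_bottomsBefore (b := b) (k - 1)
  rw [Nat.sub_add_cancel hk.1] at hsucc
  rw [show rCard n b (topsBefore b k) + 1 = k ↔ rCard n b (topsBefore b k) = k - 1 by omega,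
    rCard_eq_iff hprev, or_iff_right hk1]
  cases hb : b (k - 1)
  · rw [shelfPos_of_bottom hb]
    simp only [hb, Bool.false_eq_true, if_false, iff_false] at hsucc ⊢
    omega
  · rw [shelfPos_of_top hb]
    simp only [hb, if_true, iff_true] at hsucc ⊢
    omega

variable (b) in
/-- Positions `1, …, topsBefore b (m + 1)` hold the top cards among `1, …, m`; the next position
goes to card `m + 1` or `m + 2`. -/
lemma tau_eq (m : ℕ) : tau (m + 2) b = topsBefore b (m + 1) + 1 := by
  have hsplit : topsBefore b (m + 1) + bottomsBefore b (m + 1) = m :=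
    topsBefore_add_bottomsBefore (m + 1)
  have hts : topsBefore b (m + 2) = topsBefore b (m + 1) + if b (m + 1) then 1 else 0 :=
    topsBefore_succ (by omega)
  have hbs : bottomsBefore b (m + 2) = bottomsBefore b (m + 1) + if b (m + 1) then 0 else 1 :=
    bottomsBefore_succ (by omega)
  rw [tau, show m + 2 - 1 = m + 1 from rfl]
  cases h₁ : b (m + 1) <;> cases h₂ : b (m + 2) <;>
    simp only [h₁, shelfPos_of_top, shelfPos_of_bottom, h₂, Bool.false_eq_true, if_true,
      if_false] at hts hbs ⊢ <;> omega

lemma correctGuess_at_shelfPos_iff {m k : ℕ} (hk : k ∈ Icc 1 (m + 2)) :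
    (shelfPos (m + 2) b k ≤ tau (m + 2) b ∧
        rCard (m + 2) b (shelfPos (m + 2) b k - 1) + 1 = k) ↔
      k ≤ m + 1 ∧ b k = true ∧ (k = 1 ∨ b (k - 1) = true) := by
  have hsplit : topsBefore b (m + 1) + bottomsBefore b (m + 1) = m :=
    topsBefore_add_bottomsBefore (m + 1)
  have hts : topsBefore b (m + 2) = topsBefore b (m + 1) + if b (m + 1) then 1 else 0 :=
    topsBefore_succ (by omega)
  have hbs : bottomsBefore b (m + 2) = bottomsBefore b (m + 1) + if b (m + 1) then 0 else 1 :=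
    bottomsBefore_succ (by omega)
  rw [tau_eq]
  rw [mem_Icc] at hk
  cases hb : b k
  · simp only [Bool.false_eq_true, false_and, and_false, iff_false, not_and]
    intro hle hsucc
    rw [shelfPos_of_bottom hb] at hle hsucc
    have hkm : k = m + 2 := by
      by_contra hkm
      have := bottomsBefore_mono (b := b) (show k ≤ m + 1 by omega)
      omega
    subst hkm
    cases hb' : b (m + 1)
    · have hr : rCard (m + 2) b (topsBefore b (m + 1)) = m + 1 := by
        simp only [hb', Bool.false_eq_true, if_false] at hbs
        rw [show m + 2 - bottomsBefore b (m + 2) - 1 = topsBefore b (m + 1) by omega] at hsucc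
        omega
      rw [rCard_eq_iff (mem_Icc.2 ⟨by omega, by omega⟩), shelfPos_of_bottom hb'] at hr
      omega
    · simp only [hb', if_true] at hbs
      omega
  · rw [rCard_pred_shelfPos_add_one_iff (mem_Icc.2 hk) hb, shelfPos_of_top hb]
    simp only [true_and]
    refine ⟨fun ⟨hle, hprev⟩ => ⟨?_, hprev⟩, fun ⟨hle, hprev⟩ => ⟨?_, hprev⟩⟩
    · by_contra hkm
      obtain rfl : k = m + 2 := by omega
      rw [or_iff_right (by omega), show m + 2 - 1 = m + 1 from rfl] at hprev
      simp only [hprev, if_true] at hts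
      omega
    · have := topsBefore_mono (b := b) hle
      omega

variable (b) in
lemma correctGuesses_eq (m : ℕ) :
    correctGuesses (m + 2) b = 1 + bottomsBefore b (m + 1) +
      #{k ∈ Icc 1 (m + 1) | b k = true ∧ (k = 1 ∨ b (k - 1) = true)} := by
  have hsplit : topsBefore b (m + 1) + bottomsBefore b (m + 1) = m :=
    topsBefore_add_bottomsBefore (m + 1)
  have hτ := tau_eq b m
  have hsuccesses : #{j ∈ Icc 1 (tau (m + 2) b) | rCard (m + 2) b j = rCard (m + 2) b (j - 1) + 1}
      = #{k ∈ Icc 1 (m + 1) | b k = true ∧ (k = 1 ∨ b (k - 1) = true)} := by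
    rw [card_filter_Icc_eq_card_filter_shelfPos (show tau (m + 2) b ≤ m + 2 by omega)]
    congr 1
    ext k
    simp only [mem_filter]
    constructor
    · rintro ⟨hk, hsucc⟩
      rw [rCard_shelfPos hk, eq_comm] at hsucc
      obtain ⟨hkm, hcond⟩ := (correctGuess_at_shelfPos_iff hk).1 hsucc
      exact ⟨mem_Icc.2 ⟨(mem_Icc.1 hk).1, hkm⟩, hcond⟩
    · rintro ⟨hk, hcond⟩
      have hk' : k ∈ Icc 1 (m + 2) := mem_Icc.2 ⟨(mem_Icc.1 hk).1, (mem_Icc.1 hk).2.trans (by omega)⟩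
      rw [rCard_shelfPos hk', eq_comm]
      exact ⟨hk', (correctGuess_at_shelfPos_iff hk').2 ⟨(mem_Icc.1 hk).2, hcond⟩⟩
  rw [correctGuesses, hsuccesses]
  omega

lemma extFn_of_le {n k : ℕ} (b : Fin n → Bool) (h₁ : 1 ≤ k) (h₂ : k ≤ n) :
    extFn n b k = b ⟨k - 1, by omega⟩ := by
  rw [extFn, dif_pos]

lemma card_extFn_eq {n k : ℕ} (h₁ : 1 ≤ k) (h₂ : k ≤ n) (x : Bool) :
    #{b : Fin n → Bool | extFn n b k = x} = 2 ^ (n - 1) := by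
  simpa [extFn_of_le _ h₁ h₂] using
    card_filter_forall_mem_eq {(⟨k - 1, by omega⟩ : Fin n)} fun _ => x

lemma card_extFn_eq_and {n k l : ℕ} (hk₁ : 1 ≤ k) (hk₂ : k ≤ n) (hl₁ : 1 ≤ l) (hl₂ : l ≤ n)
    (hkl : k ≠ l) (x : Bool) :
    #{b : Fin n → Bool | extFn n b k = x ∧ extFn n b l = x} = 2 ^ (n - 2) := by
  have h := card_filter_forall_mem_eq
    ({⟨k - 1, by omega⟩, ⟨l - 1, by omega⟩} : Finset (Fin n)) fun _ => x
  rw [card_pair (by simp only [ne_eq, Fin.mk.injEq]; omega)] at h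
  simpa [extFn_of_le _ hk₁ hk₂, extFn_of_le _ hl₁ hl₂] using h

lemma sum_bottomsBefore_extFn (m : ℕ) :
    ∑ b : Fin (m + 2) → Bool, bottomsBefore (extFn (m + 2) b) (m + 1) = m * 2 ^ (m + 1) :=
  calc ∑ b : Fin (m + 2) → Bool, bottomsBefore (extFn (m + 2) b) (m + 1)
      = ∑ k ∈ Ico 1 (m + 1), #{b : Fin (m + 2) → Bool | extFn (m + 2) b k = false} :=
        sum_card_bipartiteAbove_eq_sum_card_bipartiteBelow _
    _ = ∑ k ∈ Ico 1 (m + 1), 2 ^ (m + 1) := sum_congr rfl fun k hk =>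
        card_extFn_eq (mem_Ico.1 hk).1 (by have := (mem_Ico.1 hk).2; omega) false
    _ = m * 2 ^ (m + 1) := by simp

lemma sum_card_consecutive_tops_extFn (m : ℕ) :
    ∑ b : Fin (m + 2) → Bool, #{k ∈ Icc 1 (m + 1) |
        extFn (m + 2) b k = true ∧ (k = 1 ∨ extFn (m + 2) b (k - 1) = true)} =
      2 ^ (m + 1) + m * 2 ^ m :=
  calc ∑ b : Fin (m + 2) → Bool, #{k ∈ Icc 1 (m + 1) |
        extFn (m + 2) b k = true ∧ (k = 1 ∨ extFn (m + 2) b (k - 1) = true)}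
      = ∑ k ∈ Icc 1 (m + 1), #{b : Fin (m + 2) → Bool |
          extFn (m + 2) b k = true ∧ (k = 1 ∨ extFn (m + 2) b (k - 1) = true)} :=
        sum_card_bipartiteAbove_eq_sum_card_bipartiteBelow _
    _ = 2 ^ (m + 1) + ∑ k ∈ Ioc 1 (m + 1), 2 ^ m := by
        rw [Icc_eq_cons_Ioc (by omega), sum_cons]
        congr 1
        · simpa using card_extFn_eq (n := m + 2) le_rfl (by omega) true
        · refine sum_congr rfl fun k hk => ?_
          rw [mem_Ioc] at hk
          simpa [show k ≠ 1 by omega] using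
            card_extFn_eq_and (n := m + 2) (k := k) (l := k - 1) (by omega) (by omega)
              (by omega) (by omega) (by omega) true
    _ = 2 ^ (m + 1) + m * 2 ^ m := by simp

lemma sum_correctGuesses_extFn {n : ℕ} (hn : 2 ≤ n) :
    ∑ b : Fin n → Bool, correctGuesses n (extFn n b) = 3 * n * 2 ^ (n - 2) := by
  obtain ⟨m, rfl⟩ : ∃ m, n = m + 2 := ⟨n - 2, by omega⟩
  simp only [correctGuesses_eq, sum_add_distrib, sum_bottomsBefore_extFn,
    sum_card_consecutive_tops_extFn, sum_const, card_univ, Fintype.card_fun, Fintype.card_bool,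
    Fintype.card_fin, smul_eq_mul, Nat.add_sub_cancel]
  ring

end ShelfShuffle

theorem stmt19 (n : ℕ) (hn : 2 ≤ n) :
    (∑ b : Fin n → Bool, correctGuesses n (extFn n b)) = 3 * n * 2 ^ (n - 2) ∧
    (∑ b : Fin n → Bool, (correctGuesses n (extFn n b) : ℚ)) / 2 ^ n
      = 3 * n / 4 := by
  have hsum := ShelfShuffle.sum_correctGuesses_extFn hn
  refine ⟨hsum, ?_⟩
  obtain ⟨m, rfl⟩ : ∃ m, n = m + 2 := ⟨n - 2, by omega⟩
  rw [← Nat.cast_sum, hsum]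
  push_cast
  field_simp
  ring
end
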